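/- arXiv:1011.5318 — 5 statements merged into one kernel-verified Lean document; each statement's English description precedes it below -/
import Mathlib

section
/- For all sufficiently large k one has r_{k+1}/r_k ≥ 2^k; in particular r_{k+1}/r_k → ∞ as k → ∞. -/
/-!
Past the index `k₀` from which `r` at least doubles at each step, every factor `1 + r k / r j`
of the recursion with `k₀ < j ≤ k - 3` is at least `2 ^ 3`, and the factor `j = k₀` is at least
`r k / r k₀`. As `r k → ∞` makes `r k ^ N ≥ 1`, this gives
`r (k + 1) / r k ≥ P k * 8 ^ k / (8 ^ (k₀ + 3) * r k₀)`, while `P k ≥ 2⁻ᵏ` eventually because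
`P k ^ (1 / k) → 1`; so the ratio eventually exceeds `4 ^ k / const ≥ 2 ^ k`.
-/

open Filter Finset

theorem eventually_pow_le_of_tendsto_rpow_one_div {P : ℕ → ℝ} {c : ℝ}
    (hP : ∀ᶠ k in atTop, 0 < P k)
    (hlim : Tendsto (fun k : ℕ => P k ^ ((1 : ℝ) / k)) atTop (nhds 1))
    (hc₀ : 0 ≤ c) (hc₁ : c < 1) :
    ∀ᶠ k in atTop, c ^ k ≤ P k := by
  filter_upwards [hlim.eventually (eventually_ge_nhds hc₁), hP, eventually_ne_atTop 0]
    with k hck hPk hk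
  calc c ^ k ≤ (P k ^ ((1 : ℝ) / k)) ^ k := pow_le_pow_left₀ hc₀ hck k
    _ = P k := by rw [one_div, Real.rpow_inv_natCast_pow hPk.le hk]

theorem two_pow_mul_le_mul_pow_mul {p x Q : ℝ} {k N : ℕ} (hp : (1 / 2) ^ k ≤ p)
    (hp₀ : 0 < p) (hx : 1 ≤ x) (hQ : 4 ^ k * x ≤ Q) :
    2 ^ k * x ≤ p * x ^ N * Q := by
  have hp' : 1 ≤ p * 2 ^ k := by rwa [one_div_pow, div_le_iff₀ (by positivity)] at hp
  calc 2 ^ k * x ≤ p * 2 ^ k * (2 ^ k * x) := le_mul_of_one_le_left (by positivity) hp'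
    _ = p * (4 ^ k * x) := by rw [show (4 : ℝ) = 2 * 2 by norm_num, mul_pow]; ring
    _ ≤ p * Q := mul_le_mul_of_nonneg_left hQ hp₀.le
    _ ≤ p * Q * x ^ N := le_mul_of_one_le_right
        (mul_pos hp₀ ((by positivity : (0 : ℝ) < 4 ^ k * x).trans_le hQ)).le (one_le_pow₀ hx)
    _ = p * x ^ N * Q := mul_right_comm _ _ _

section GeometricGrowth

variable {r : ℕ → ℝ} {c : ℝ} {k₀ : ℕ}

theorem pow_mul_le_of_mul_le_succ (hc : 0 ≤ c) (hr : ∀ k ≥ k₀, c * r k ≤ r (k + 1))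
    {j k : ℕ} (hj : k₀ ≤ j) (hjk : j ≤ k) : c ^ (k - j) * r j ≤ r k := by
  obtain ⟨n, rfl⟩ := Nat.exists_eq_add_of_le hjk
  simpa using geom_le (u := fun i => r (j + i)) hc n fun i _ => hr (j + i) (by omega)

theorem tendsto_atTop_of_mul_le_succ (hc : 1 < c) (hr : ∀ k ≥ k₀, c * r k ≤ r (k + 1))
    (hpos : 0 < r k₀) : Tendsto r atTop atTop := by
  have hgeom : Tendsto (fun k => c ^ (k - k₀) * r k₀) atTop atTop :=
    ((tendsto_pow_atTop_atTop_of_one_lt hc).comp (tendsto_sub_atTop_nat k₀)).atTop_mul_const hpos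
  refine tendsto_atTop_mono' _ ?_ hgeom
  filter_upwards [eventually_ge_atTop k₀] with k hk
  exact pow_mul_le_of_mul_le_succ (by linarith) hr le_rfl hk

theorem mul_eight_pow_le_prod_one_add_div (hr : ∀ k ≥ k₀, 2 * r k ≤ r (k + 1))
    (hpos : ∀ j, 1 ≤ j → 0 < r j) (hk₀ : 1 ≤ k₀) {k : ℕ} (hk : k₀ + 3 ≤ k) :
    r k * 8 ^ k ≤ 8 ^ (k₀ + 3) * r k₀ * ∏ j ∈ Icc 1 k, (1 + r k / r j) := by
  have hrk₀ := hpos k₀ hk₀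
  have hratio_nonneg : ∀ j ∈ Icc 1 k, 0 ≤ r k / r j := fun j hj =>
    div_nonneg (hpos k (by omega)).le (hpos j (mem_Icc.mp hj).1).le
  have hfar : ∀ j ∈ Ioc k₀ (k - 3), 8 ≤ 1 + r k / r j := by
    intro j hj
    obtain ⟨hk₀j, hjk⟩ := mem_Ioc.mp hj
    have hrj := hpos j (by omega)
    have : (2 : ℝ) ^ 3 ≤ r k / r j :=
      calc (2 : ℝ) ^ 3 ≤ 2 ^ (k - j) := pow_le_pow_right₀ one_le_two (by omega)
        _ ≤ r k / r j := (le_div_iff₀ hrj).mpr (pow_mul_le_of_mul_le_succ zero_le_two hr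
          hk₀j.le (by omega))
    linarith
  have hprod : r k / r k₀ * 8 ^ (k - (k₀ + 3)) ≤ ∏ j ∈ Icc 1 k, (1 + r k / r j) :=
    calc r k / r k₀ * 8 ^ (k - (k₀ + 3))
        = r k / r k₀ * ∏ _j ∈ Ioc k₀ (k - 3), (8 : ℝ) := by
          rw [prod_const, Nat.card_Ioc, Nat.sub_sub, Nat.add_comm 3]
      _ ≤ (1 + r k / r k₀) * ∏ j ∈ Ioc k₀ (k - 3), (1 + r k / r j) := by
          have := hratio_nonneg k₀ (mem_Icc.mpr ⟨hk₀, by omega⟩)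
          gcongr with j hj
          · linarith
          · exact hfar j hj
      _ = ∏ j ∈ insert k₀ (Ioc k₀ (k - 3)), (1 + r k / r j) := by
          rw [prod_insert (by simp)]
      _ ≤ ∏ j ∈ Icc 1 k, (1 + r k / r j) := by
          have hsub : insert k₀ (Ioc k₀ (k - 3)) ⊆ Icc 1 k := by
            intro j hj
            rw [mem_insert, mem_Ioc] at hj
            rw [mem_Icc]
            omega
          refine prod_le_prod_of_subset_of_one_le hsub (fun j hj => ?_) fun j hj _ => ?_
          · linarith [hratio_nonneg j (hsub hj)]
          · linarith [hratio_nonneg j hj]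
  calc r k * 8 ^ k = 8 ^ (k₀ + 3) * r k₀ * (r k / r k₀ * 8 ^ (k - (k₀ + 3))) := by
        rw [← pow_sub_mul_pow 8 hk]
        field_simp
    _ ≤ 8 ^ (k₀ + 3) * r k₀ * ∏ j ∈ Icc 1 k, (1 + r k / r j) := by gcongr

theorem four_pow_mul_le_prod_one_add_div (hr : ∀ k ≥ k₀, 2 * r k ≤ r (k + 1))
    (hpos : ∀ j, 1 ≤ j → 0 < r j) (hk₀ : 1 ≤ k₀) {k : ℕ} (hk : k₀ + 3 ≤ k)
    (hbig : 8 ^ (k₀ + 3) * r k₀ ≤ 2 ^ k) :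
    4 ^ k * r k ≤ ∏ j ∈ Icc 1 k, (1 + r k / r j) := by
  have hQ_nonneg : 0 ≤ ∏ j ∈ Icc 1 k, (1 + r k / r j) := prod_nonneg fun j hj => by
    have := hpos j (mem_Icc.mp hj).1
    have := hpos k (by omega)
    positivity
  refine le_of_mul_le_mul_right ?_ (by positivity : (0 : ℝ) < 2 ^ k)
  calc 4 ^ k * r k * 2 ^ k = r k * 8 ^ k := by
        rw [show (8 : ℝ) = 4 * 2 by norm_num, mul_pow]
        ring
    _ ≤ 8 ^ (k₀ + 3) * r k₀ * ∏ j ∈ Icc 1 k, (1 + r k / r j) :=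
        mul_eight_pow_le_prod_one_add_div hr hpos hk₀ hk
    _ ≤ 2 ^ k * ∏ j ∈ Icc 1 k, (1 + r k / r j) := mul_le_mul_of_nonneg_right hbig hQ_nonneg
    _ = (∏ j ∈ Icc 1 k, (1 + r k / r j)) * 2 ^ k := mul_comm _ _

end GeometricGrowth

theorem stmt_0_general (N : ℕ)
    (P r : ℕ → ℝ)
    (hP : ∀ k, 1 ≤ k → 0 < P k)
    (hPlim : Tendsto (fun k : ℕ => (P k) ^ ((1 : ℝ) / k)) atTop (nhds 1))
    (hrpos : ∀ k, 1 ≤ k → 0 < r k)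
    (hr2 : ∀ᶠ k in atTop, 2 * r k ≤ r (k + 1))
    (hrec : ∀ k, 1 ≤ k →
      r (k + 1) = P k * (r k) ^ N * ∏ j ∈ Finset.Icc 1 k, (1 + r k / r j)) :
    (∀ᶠ k in atTop, (2 : ℝ) ^ k ≤ r (k + 1) / r k) ∧
      Tendsto (fun k : ℕ => r (k + 1) / r k) atTop atTop := by
  obtain ⟨k₀, hk₀⟩ := eventually_atTop.mp (hr2.and (eventually_ge_atTop 1))
  have hdouble : ∀ k ≥ k₀, 2 * r k ≤ r (k + 1) := fun k hk => (hk₀ k hk).1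
  have hk₀1 : 1 ≤ k₀ := (hk₀ k₀ le_rfl).2
  have hrk₀ := hrpos k₀ hk₀1
  have key : ∀ᶠ k in atTop, (2 : ℝ) ^ k ≤ r (k + 1) / r k := by
    filter_upwards [eventually_pow_le_of_tendsto_rpow_one_div
        ((eventually_ge_atTop 1).mono hP) hPlim (c := 1 / 2) (by norm_num) (by norm_num),
      (tendsto_atTop_of_mul_le_succ one_lt_two hdouble hrk₀).eventually_ge_atTop 1,
      (tendsto_pow_atTop_atTop_of_one_lt one_lt_two).eventually_ge_atTop (8 ^ (k₀ + 3) * r k₀),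
      eventually_ge_atTop (k₀ + 3)] with k hPk hrk hbig hk
    rw [le_div_iff₀ (by linarith), hrec k (by omega)]
    exact two_pow_mul_le_mul_pow_mul hPk (hP k (by omega)) hrk
      (four_pow_mul_le_prod_one_add_div hdouble hrpos hk₀1 hk hbig)
  exact ⟨key, tendsto_atTop_mono' _ key (tendsto_pow_atTop_atTop_of_one_lt one_lt_two)⟩

/-- For all sufficiently large `k` one has `r (k+1) / r k ≥ 2 ^ k`;
in particular `r (k+1) / r k → ∞` as `k → ∞`. -/
theorem stmt_0 (N : ℕ) (C : ℂ) (hC : C ≠ 0)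
    (P r : ℕ → ℝ)
    (hP : ∀ k, 1 ≤ k → 0 < P k)
    (hPlim : Tendsto (fun k : ℕ => (P k) ^ ((1 : ℝ) / k)) atTop (nhds 1))
    (hrpos : ∀ k, 1 ≤ k → 0 < r k)
    (hr2 : ∀ᶠ k in atTop, 2 * r k ≤ r (k + 1))
    (hrec : ∀ k, 1 ≤ k →
      r (k + 1) = P k * (r k) ^ N * ∏ j ∈ Finset.Icc 1 k, (1 + r k / r j)) :
    (∀ᶠ k in atTop, (2 : ℝ) ^ k ≤ r (k + 1) / r k) ∧
      Tendsto (fun k : ℕ => r (k + 1) / r k) atTop atTop :=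
  stmt_0_general N P r hP hPlim hrpos hr2 hrec
end

section
/- For all 0 < α < β, the tail products converge to 1 uniformly: sup over complex w with α ≤ |w| ≤ β of |∏_{j=k+1}^{∞}(1 − w a_k/a_j) − 1| tends to 0 as k → ∞. -/
/-!
The recurrence forces super-geometric growth. Keeping only the factors `j = 1, 2` of the product
gives `r (k + 1) / r k ≥ P k * r k ^ N * r k / (r 1 * r 2)`; eventually `r k ≥ 1`, `r k` grows at
least like `2 ^ k` and `P k ≥ (3 / 4) ^ k`, so `r k / r (k + 1) → 0`. Because `r` eventually
doubles, the factors of the tail product satisfy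
`‖w a k / a (k + 1 + j)‖ ≤ ‖w‖ (r k / r (k + 1)) 2⁻ʲ`, and `‖∏ (1 + f i) - 1‖ ≤ exp (∑ ‖f i‖) - 1`
bounds the distance of the tail product to `1` by `exp (2 β r k / r (k + 1)) - 1 → 0`.
-/

open Filter Topology

theorem eventually_pow_le_of_tendsto_rpow {P : ℕ → ℝ} {b L : ℝ} (hP : ∀ᶠ k in atTop, 0 ≤ P k)
    (hlim : Tendsto (fun k : ℕ => P k ^ ((1 : ℝ) / k)) atTop (𝓝 L)) (hb : 0 ≤ b) (hbL : b < L) :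
    ∀ᶠ k in atTop, b ^ k ≤ P k := by
  filter_upwards [hlim.eventually (eventually_ge_nhds hbL), hP, eventually_ge_atTop 1]
    with k hk hPk hk1
  have hk0 : (k : ℝ) ≠ 0 := by positivity
  calc b ^ k ≤ (P k ^ ((1 : ℝ) / k)) ^ k := by gcongr
    _ = P k := by
      rw [← Real.rpow_natCast, ← Real.rpow_mul hPk, one_div_mul_cancel hk0, Real.rpow_one]

theorem norm_tprod_one_add_sub_one_le {ι R : Type*} [NormedCommRing R] [NormOneClass R]
    [CompleteSpace R] {f : ι → R} (hf : Summable (‖f ·‖)) :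
    ‖∏' i, (1 + f i) - 1‖ ≤ Real.exp (∑' i, ‖f i‖) - 1 := by
  have hprod := (multipliable_one_add_of_summable hf).hasProd
  refine le_of_tendsto' ((hprod.sub_const 1).norm) fun t => ?_
  exact (t.norm_prod_one_add_sub_one_le f).trans <| by
    gcongr; exact hf.sum_le_tsum t fun i _ => norm_nonneg _

section Doubling

variable {r : ℕ → ℝ} {K : ℕ}

theorem pow_mul_le_of_doubling {m : ℕ} (h : ∀ n, K ≤ n → 2 * r n ≤ r (n + 1))
    (hm : K ≤ m) (j : ℕ) : 2 ^ j * r m ≤ r (m + j) := by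
  induction j with
  | zero => simp
  | succ j ih =>
    calc 2 ^ (j + 1) * r m = 2 * (2 ^ j * r m) := by ring
      _ ≤ 2 * r (m + j) := by gcongr
      _ ≤ r (m + j + 1) := h _ (hm.trans (Nat.le_add_right m j))

theorem tendsto_atTop_of_doubling (h : ∀ n, K ≤ n → 2 * r n ≤ r (n + 1))
    (hK : 0 < r K) : Tendsto r atTop atTop := by
  have hgeom : Tendsto (fun k => 2 ^ (k - K) * r K) atTop atTop :=
    ((tendsto_pow_atTop_atTop_of_one_lt one_lt_two).atTop_mul_const hK).comp
      (tendsto_sub_atTop_nat K)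
  refine tendsto_atTop_mono' _ ?_ hgeom
  filter_upwards [eventually_ge_atTop K] with k hk
  simpa [Nat.add_sub_cancel' hk] using pow_mul_le_of_doubling h le_rfl (k - K)

theorem tendsto_mul_atTop_of_doubling {P : ℕ → ℝ} (hP : ∀ᶠ k in atTop, 0 ≤ P k)
    (hPlim : Tendsto (fun k : ℕ => P k ^ ((1 : ℝ) / k)) atTop (𝓝 1))
    (h : ∀ n, K ≤ n → 2 * r n ≤ r (n + 1)) (hK : 0 < r K) :
    Tendsto (fun k => P k * r k) atTop atTop := by
  have hgeom : Tendsto (fun k : ℕ => r K / 2 ^ K * (3 / 2 : ℝ) ^ k) atTop atTop :=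
    (tendsto_pow_atTop_atTop_of_one_lt (by norm_num)).const_mul_atTop (by positivity)
  refine tendsto_atTop_mono' _ ?_ hgeom
  filter_upwards [eventually_pow_le_of_tendsto_rpow hP hPlim (by norm_num : (0 : ℝ) ≤ 3 / 4)
    (by norm_num), eventually_ge_atTop K] with k hPk hk
  have hr : 2 ^ (k - K) * r K ≤ r k := by
    simpa [Nat.add_sub_cancel' hk] using pow_mul_le_of_doubling h le_rfl (k - K)
  have h32 : (3 / 2 : ℝ) ^ k = (3 / 4) ^ k * (2 ^ (k - K) * 2 ^ K) := by
    rw [← pow_add, Nat.sub_add_cancel hk, ← mul_pow]; norm_num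
  calc r K / 2 ^ K * (3 / 2 : ℝ) ^ k = (3 / 4 : ℝ) ^ k * (2 ^ (k - K) * r K) := by
        rw [h32]; field_simp
    _ ≤ P k * r k := by gcongr; exact (by positivity : (0 : ℝ) ≤ (3 / 4) ^ k).trans hPk

end Doubling

theorem div_mul_div_le_prod_Icc_one_add_div {r : ℕ → ℝ} (hrpos : ∀ k, 1 ≤ k → 0 < r k) {k : ℕ}
    (hk : 2 ≤ k) : r k / r 1 * (r k / r 2) ≤ ∏ j ∈ Finset.Icc 1 k, (1 + r k / r j) := by
  have hsub : ({1, 2} : Finset ℕ) ⊆ Finset.Icc 1 k := by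
    intro j; simp only [Finset.mem_insert, Finset.mem_singleton, Finset.mem_Icc]; omega
  have hdiv : ∀ j, 1 ≤ j → 0 ≤ r k / r j := fun j hj =>
    (div_pos (hrpos k (by omega)) (hrpos j hj)).le
  have hfac : ∀ j ∈ Finset.Icc 1 k, 1 ≤ 1 + r k / r j := fun j hj =>
    le_add_of_nonneg_right (hdiv j (Finset.mem_Icc.1 hj).1)
  calc r k / r 1 * (r k / r 2) ≤ (1 + r k / r 1) * (1 + r k / r 2) :=
        mul_le_mul (by linarith) (by linarith) (hdiv 2 (by norm_num)) (by linarith [hdiv 1 le_rfl])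
    _ = ∏ j ∈ {1, 2}, (1 + r k / r j) := by rw [Finset.prod_pair (by norm_num)]
    _ ≤ ∏ j ∈ Finset.Icc 1 k, (1 + r k / r j) :=
        Finset.prod_le_prod_of_subset_of_one_le hsub
          (fun j hj => zero_le_one.trans (hfac j (hsub hj))) (fun j hj _ => hfac j hj)

theorem tendsto_succ_div_atTop {N : ℕ} {P r : ℕ → ℝ} (hP : ∀ k, 1 ≤ k → 0 < P k)
    (hPlim : Tendsto (fun k : ℕ => P k ^ ((1 : ℝ) / k)) atTop (𝓝 1))
    (hrpos : ∀ k, 1 ≤ k → 0 < r k) (hr2 : ∀ᶠ k in atTop, 2 * r k ≤ r (k + 1))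
    (hrec : ∀ k, 1 ≤ k →
      r (k + 1) = P k * r k ^ N * ∏ j ∈ Finset.Icc 1 k, (1 + r k / r j)) :
    Tendsto (fun k => r (k + 1) / r k) atTop atTop := by
  obtain ⟨K, hK⟩ := eventually_atTop.mp hr2
  have hdbl : ∀ n, max K 1 ≤ n → 2 * r n ≤ r (n + 1) := fun n hn => hK n (le_of_max_le_left hn)
  have hpos : 0 < r (max K 1) := hrpos _ (le_max_right _ _)
  have hP0 : ∀ᶠ k in atTop, 0 ≤ P k := eventually_atTop.2 ⟨1, fun k hk => (hP k hk).le⟩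
  have hr1pos := hrpos 1 le_rfl
  have hr2pos := hrpos 2 (by norm_num)
  have hr12 : 0 < r 1 * r 2 := mul_pos hr1pos hr2pos
  refine tendsto_atTop_mono' _ ?_
    ((tendsto_mul_atTop_of_doubling hP0 hPlim hdbl hpos).atTop_div_const hr12)
  filter_upwards [(tendsto_atTop_of_doubling hdbl hpos).eventually_ge_atTop 1,
    eventually_ge_atTop 2] with k hrk hk
  rw [hrec k (by omega), le_div_iff₀ (by linarith)]
  have hPk := (hP k (by omega)).le
  calc P k * r k / (r 1 * r 2) * r k = P k * 1 * (r k / r 1 * (r k / r 2)) := by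
        field_simp
    _ ≤ P k * r k ^ N * ∏ j ∈ Finset.Icc 1 k, (1 + r k / r j) := by
        gcongr
        · exact one_le_pow₀ hrk
        · exact div_mul_div_le_prod_Icc_one_add_div hrpos hk

theorem norm_tprod_tail_sub_one_le {r : ℕ → ℝ} {a : ℕ → ℂ} {K k : ℕ}
    (hdbl : ∀ n, K ≤ n → 2 * r n ≤ r (n + 1)) (hK : K ≤ k) (hk : 1 ≤ k)
    (hrpos : ∀ k, 1 ≤ k → 0 < r k) (ha : ∀ k, 1 ≤ k → ‖a k‖ = r k) (w : ℂ) :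
    ‖∏' j, (1 - w * a k / a (k + 1 + j)) - 1‖ ≤ Real.exp (2 * (‖w‖ * (r k / r (k + 1)))) - 1 := by
  set δ := ‖w‖ * (r k / r (k + 1))
  have hterm : ∀ j, ‖-(w * a k / a (k + 1 + j))‖ ≤ δ * (1 / 2) ^ j := fun j => by
    have hrk := hrpos k hk
    have hrk1 := hrpos (k + 1) (by omega)
    rw [norm_neg, norm_div, norm_mul, ha k hk, ha _ (by omega)]
    calc ‖w‖ * r k / r (k + 1 + j) ≤ ‖w‖ * r k / (2 ^ j * r (k + 1)) := by
          gcongr; exact pow_mul_le_of_doubling hdbl (by omega) j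
      _ = δ * (1 / 2) ^ j := by simp only [δ, one_div_pow]; field_simp
  have hgeom : HasSum (fun j : ℕ => δ * (1 / 2) ^ j) (δ * 2) := hasSum_geometric_two.mul_left δ
  have hsum : Summable fun j => ‖-(w * a k / a (k + 1 + j))‖ :=
    hgeom.summable.of_nonneg_of_le (fun _ => norm_nonneg _) hterm
  calc ‖∏' j, (1 - w * a k / a (k + 1 + j)) - 1‖
      = ‖∏' j, (1 + -(w * a k / a (k + 1 + j))) - 1‖ := by simp only [sub_eq_add_neg]
    _ ≤ Real.exp (∑' j, ‖-(w * a k / a (k + 1 + j))‖) - 1 := norm_tprod_one_add_sub_one_le hsum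
    _ ≤ Real.exp (2 * δ) - 1 := by
        gcongr
        exact (hsum.tsum_le_tsum hterm hgeom.summable).trans_eq (hgeom.tsum_eq.trans (mul_comm _ _))

theorem stmt_2_general (N : ℕ)
    (P r : ℕ → ℝ)
    (hP : ∀ k, 1 ≤ k → 0 < P k)
    (hPlim : Tendsto (fun k : ℕ => (P k) ^ ((1 : ℝ) / k)) atTop (nhds 1))
    (hrpos : ∀ k, 1 ≤ k → 0 < r k)
    (hr2 : ∀ᶠ k in atTop, 2 * r k ≤ r (k + 1))
    (hrec : ∀ k, 1 ≤ k →
      r (k + 1) = P k * (r k) ^ N * ∏ j ∈ Finset.Icc 1 k, (1 + r k / r j))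
    (a : ℕ → ℂ) (ha : ∀ k, 1 ≤ k → ‖a k‖ = r k) :
    ∀ α β : ℝ, 0 < α → α < β → ∀ ε : ℝ, 0 < ε → ∃ K : ℕ, ∀ k, K ≤ k →
      ∀ w : ℂ, α ≤ ‖w‖ → ‖w‖ ≤ β →
        ‖(∏' j : ℕ, (1 - w * a k / a (k + 1 + j))) - 1‖ ≤ ε := by
  intro α β _ _ ε hε
  have hratio : Tendsto (fun k => r k / r (k + 1)) atTop (𝓝 0) :=
    (tendsto_succ_div_atTop hP hPlim hrpos hr2 hrec).inv_tendsto_atTop.congr fun k => inv_div _ _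
  have hbound : Tendsto (fun k => Real.exp (2 * (β * (r k / r (k + 1)))) - 1) atTop (𝓝 0) := by
    simpa using ((hratio.const_mul β).const_mul 2).rexp.sub_const 1
  obtain ⟨K, hK⟩ := eventually_atTop.mp hr2
  obtain ⟨K', hK'⟩ := eventually_atTop.mp (hbound.eventually (eventually_le_nhds hε))
  refine ⟨max (max K 1) K', fun k hk w _ hwβ => ?_⟩
  have hk1 : 1 ≤ k := by omega
  have hratio_nonneg : 0 ≤ r k / r (k + 1) := (div_pos (hrpos k hk1) (hrpos _ (by omega))).le
  calc ‖∏' j, (1 - w * a k / a (k + 1 + j)) - 1‖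
      ≤ Real.exp (2 * (‖w‖ * (r k / r (k + 1)))) - 1 :=
        norm_tprod_tail_sub_one_le hK (by omega) hk1 hrpos ha w
    _ ≤ Real.exp (2 * (β * (r k / r (k + 1)))) - 1 := by gcongr
    _ ≤ ε := hK' k (by omega)

/-- the tail products `∏_{j=k+1}^∞ (1 - w a_k / a_j)` tend to `1`
uniformly on annuli `α ≤ |w| ≤ β` as `k → ∞`. -/
theorem stmt_2 (N : ℕ) (C : ℂ) (hC : C ≠ 0)
    (P r : ℕ → ℝ)
    (hP : ∀ k, 1 ≤ k → 0 < P k)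
    (hPlim : Tendsto (fun k : ℕ => (P k) ^ ((1 : ℝ) / k)) atTop (nhds 1))
    (hrpos : ∀ k, 1 ≤ k → 0 < r k)
    (hr2 : ∀ᶠ k in atTop, 2 * r k ≤ r (k + 1))
    (hrec : ∀ k, 1 ≤ k →
      r (k + 1) = P k * (r k) ^ N * ∏ j ∈ Finset.Icc 1 k, (1 + r k / r j))
    (a : ℕ → ℂ) (ha : ∀ k, 1 ≤ k → ‖a k‖ = r k) :
    ∀ α β : ℝ, 0 < α → α < β → ∀ ε : ℝ, 0 < ε → ∃ K : ℕ, ∀ k, K ≤ k →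
      ∀ w : ℂ, α ≤ ‖w‖ → ‖w‖ ≤ β →
        ‖(∏' j : ℕ, (1 - w * a k / a (k + 1 + j))) - 1‖ ≤ ε :=
  stmt_2_general N P r hP hPlim hrpos hr2 hrec a ha
end

section
/- For all 0 < α < β and every ε > 0 there exists K such that for all k ≥ K and all complex w with α ≤ |w| ≤ β, (1−ε)·E_k(w) ≤ |f(w a_k)| ≤ (1+ε)·E_k(w), where E_k(w) = |C| |w|^{k−1+N} |w−1| r_{k+1} / (2 P_k). -/
open Filter Finset Topology

/-!
The sequence `r` grows so fast that `r k / r (k + 1) → 0`: the recursion gives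
`r (k + 1) / r k ≥ P k * r k / (r 1 * r 2)`, and `P k * r k → ∞` because `P` is subexponential
while `r` at least doubles. Fix `k` and `w`, with `m` indexing the factors `1 - w a_k / a_m`.
For `m < k` the factor has modulus `‖w‖ (1 + r_k / r_m)` up to a relative error
`O(r_m / r_k)`; for `m = k` it is `1 - w`; for `m > k` it is `1` up to `O(r_k / r_m)`.
The relative errors add up to `O(∑_{m<k} r_m / r_k + r_k / r_{k+1}) → 0`, and by the recursion
the product of the main terms is `‖w‖^(k-1) ‖w - 1‖ r_{k+1} / (2 P_k r_k^N)`.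
-/

section Products

variable {ι : Type*}

theorem one_sub_sum_le_prod_one_sub (s : Finset ι) {d : ι → ℝ} (hd0 : ∀ i ∈ s, 0 ≤ d i)
    (hd1 : ∀ i ∈ s, d i ≤ 1) : 1 - ∑ i ∈ s, d i ≤ ∏ i ∈ s, (1 - d i) := by
  classical
  induction s using Finset.induction_on with
  | empty => simp
  | insert a s has ih =>
    rw [sum_insert has, prod_insert has]
    have ih := ih (fun i hi => hd0 i (mem_insert_of_mem hi))
      fun i hi => hd1 i (mem_insert_of_mem hi)
    have hs0 : 0 ≤ ∑ i ∈ s, d i := sum_nonneg fun i hi => hd0 i (mem_insert_of_mem hi)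
    have ha0 := hd0 a (mem_insert_self a s)
    nlinarith [mul_le_mul_of_nonneg_left ih (sub_nonneg.2 (hd1 a (mem_insert_self a s)))]

theorem prod_bounds_of_abs_sub_le (s : Finset ι) {G t d : ι → ℝ} {D : ℝ}
    (hd0 : ∀ i ∈ s, 0 ≤ d i) (ht0 : ∀ i ∈ s, 0 ≤ t i) (hGt : ∀ i ∈ s, |G i - t i| ≤ d i * t i)
    (hsum : ∑ i ∈ s, d i ≤ D) (hD : D < 1) :
    (1 - D) * ∏ i ∈ s, t i ≤ ∏ i ∈ s, G i ∧ ∏ i ∈ s, G i ≤ (1 - D)⁻¹ * ∏ i ∈ s, t i := by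
  have hdD : ∀ i ∈ s, d i ≤ D := fun i hi => (single_le_sum hd0 hi).trans hsum
  have hminus : 1 - D ≤ ∏ i ∈ s, (1 - d i) :=
    (sub_le_sub_left hsum 1).trans
      (one_sub_sum_le_prod_one_sub s hd0 fun i hi => (hdD i hi).trans hD.le)
  have hplus : ∏ i ∈ s, (1 + d i) ≤ (1 - D)⁻¹ := by
    have h : (∏ i ∈ s, (1 + d i)) * ∏ i ∈ s, (1 - d i) ≤ 1 := by
      rw [← prod_mul_distrib]
      exact prod_le_one (fun i hi => by nlinarith [hd0 i hi, hdD i hi])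
        fun i hi => by nlinarith [hd0 i hi]
    rw [← one_div, le_div_iff₀ (by linarith)]
    exact (mul_le_mul_of_nonneg_left hminus
      (prod_nonneg fun i hi => by linarith [hd0 i hi])).trans h
  have hlow : ∀ i ∈ s, (1 - d i) * t i ≤ G i := fun i hi => by
    linarith [(abs_sub_le_iff.1 (hGt i hi)).2]
  have hhigh : ∀ i ∈ s, G i ≤ (1 + d i) * t i := fun i hi => by
    linarith [(abs_sub_le_iff.1 (hGt i hi)).1]
  have hlow0 : ∀ i ∈ s, 0 ≤ (1 - d i) * t i := fun i hi =>
    mul_nonneg (by linarith [hdD i hi]) (ht0 i hi)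
  have ht : 0 ≤ ∏ i ∈ s, t i := prod_nonneg ht0
  constructor
  · calc (1 - D) * ∏ i ∈ s, t i ≤ (∏ i ∈ s, (1 - d i)) * ∏ i ∈ s, t i := by gcongr
      _ = ∏ i ∈ s, (1 - d i) * t i := prod_mul_distrib.symm
      _ ≤ ∏ i ∈ s, G i := prod_le_prod hlow0 hlow
  · calc ∏ i ∈ s, G i ≤ ∏ i ∈ s, (1 + d i) * t i :=
          prod_le_prod (fun i hi => (hlow0 i hi).trans (hlow i hi)) hhigh
      _ = (∏ i ∈ s, (1 + d i)) * ∏ i ∈ s, t i := prod_mul_distrib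
      _ ≤ (1 - D)⁻¹ * ∏ i ∈ s, t i := by gcongr

end Products

theorem HasProd.bounds_of_abs_sub_le {G t d : ℕ → ℝ} {g T D : ℝ} (hG : HasProd G g)
    (ht : HasProd t T) (hd0 : ∀ i, 0 ≤ d i) (ht0 : ∀ i, 0 ≤ t i)
    (hGt : ∀ i, |G i - t i| ≤ d i * t i) (hsum : ∀ᶠ n in atTop, ∑ i ∈ range n, d i ≤ D)
    (hD : D < 1) : (1 - D) * T ≤ g ∧ g ≤ (1 - D)⁻¹ * T := by
  have h := hsum.mono fun n hn =>
    prod_bounds_of_abs_sub_le (range n) (fun i _ => hd0 i) (fun i _ => ht0 i) (fun i _ => hGt i)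
      hn hD
  exact ⟨le_of_tendsto_of_tendsto (ht.tendsto_prod_nat.const_mul _) hG.tendsto_prod_nat
      (h.mono fun _ => And.left),
    le_of_tendsto_of_tendsto hG.tendsto_prod_nat (ht.tendsto_prod_nat.const_mul _)
      (h.mono fun _ => And.right)⟩

theorem abs_norm_one_sub_sub_le {u : ℂ} {ρ y α β : ℝ} (hu : ‖u‖ = ρ * y) (hα : 0 < α)
    (hαρ : α ≤ ρ) (hρβ : ρ ≤ β) (hy : 0 < y) :
    |‖1 - u‖ - ρ * (1 + y)| ≤ (1 + β) / α * y⁻¹ * (ρ * (1 + y)) := by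
  have h1 : |‖1 - u‖ - ‖u‖| ≤ 1 := by
    simpa using abs_norm_sub_norm_le (1 - u) (-u)
  rw [hu] at h1
  have hρ : 0 < ρ := hα.trans_le hαρ
  calc |‖1 - u‖ - ρ * (1 + y)| ≤ 1 + β := by
        rw [abs_le] at h1 ⊢; constructor <;> nlinarith
    _ = (1 + β) * 1 := (mul_one _).symm
    _ ≤ (1 + β) * (ρ * (1 + y) / (α * y)) := by
        gcongr
        · linarith
        · rw [one_le_div (by positivity)]
          nlinarith
    _ = (1 + β) / α * y⁻¹ * (ρ * (1 + y)) := by field_simp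

theorem sum_Ico_le_two_mul_of_two_mul_succ_le {v : ℕ → ℝ} {j : ℕ} (hv0 : ∀ m, 0 ≤ v m)
    (hv : ∀ m, j ≤ m → 2 * v (m + 1) ≤ v m) (n : ℕ) : ∑ m ∈ Ico j n, v m ≤ 2 * v j := by
  suffices h : ∀ n, j ≤ n → ∑ m ∈ Ico j n, v m + 2 * v n ≤ 2 * v j by
    rcases le_total j n with hjn | hnj
    · linarith [h n hjn, hv0 n]
    · simp [Ico_eq_empty_of_le hnj, hv0 j]
  intro n hjn
  induction n, hjn using Nat.le_induction with
  | base => simp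
  | succ n hjn ih =>
    rw [sum_Ico_succ_top hjn]
    linarith [hv n hjn]

theorem tendsto_sum_range_div_of_tendsto_div_succ {s : ℕ → ℝ} (hs : ∀ m, 0 < s m)
    (hratio : Tendsto (fun k => s k / s (k + 1)) atTop (𝓝 0)) :
    Tendsto (fun k => ∑ m ∈ range k, s m / s k) atTop (𝓝 0) := by
  set T : ℕ → ℝ := fun k => ∑ m ∈ range k, s m / s k
  set x : ℕ → ℝ := fun k => s k / s (k + 1)
  have hT0 : ∀ k, 0 ≤ T k := fun k => sum_nonneg fun m _ => (div_pos (hs m) (hs k)).le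
  have hx0 : ∀ k, 0 ≤ x k := fun k => (div_pos (hs k) (hs (k + 1))).le
  have hrec : ∀ k, T (k + 1) = (T k + 1) * x k := fun k => by
    simp only [T, x, sum_range_succ, ← sum_div]
    field_simp [(hs k).ne']
  -- once `x ≤ 1/2`, the recursion keeps `T` bounded, and then `T (k + 1) ≤ (M + 1) * x k`
  obtain ⟨K, hK⟩ := eventually_atTop.1 (hratio.eventually (eventually_le_nhds one_half_pos))
  set M := max (T K) 1
  have hbdd : ∀ k, K ≤ k → T k ≤ M := by
    intro k hk
    induction k, hk using Nat.le_induction with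
    | base => exact le_max_left _ _
    | succ k hk ih =>
      have hM : 1 ≤ M := le_max_right _ _
      rw [hrec]
      nlinarith [mul_le_mul (add_le_add_right ih 1) (hK k hk) (hx0 k) (by positivity)]
  rw [← tendsto_add_atTop_iff_nat 1]
  refine squeeze_zero' (Eventually.of_forall fun k => hT0 (k + 1)) ?_
    (by simpa using hratio.const_mul (M + 1))
  filter_upwards [eventually_ge_atTop K] with k hk
  rw [hrec]
  exact mul_le_mul_of_nonneg_right (by linarith [hbdd k hk]) (hx0 k)

theorem exists_pos_mul_two_pow_le {r : ℕ → ℝ} (hpos : ∀ᶠ k in atTop, 0 < r k)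
    (h2 : ∀ᶠ k in atTop, 2 * r k ≤ r (k + 1)) : ∃ c > 0, ∀ᶠ k in atTop, c * 2 ^ k ≤ r k := by
  obtain ⟨K, hK⟩ := eventually_atTop.1 (hpos.and h2)
  refine ⟨r K / 2 ^ K, div_pos (hK K le_rfl).1 (by positivity), ?_⟩
  filter_upwards [eventually_ge_atTop K] with k hk
  obtain ⟨i, rfl⟩ := Nat.exists_eq_add_of_le hk
  have hgeom : 2 ^ i * r K ≤ r (K + i) :=
    geom_le (u := fun i => r (K + i)) zero_le_two i fun j _ => (hK (K + j) (by omega)).2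
  calc r K / 2 ^ K * 2 ^ (K + i) = 2 ^ i * r K := by rw [pow_add]; field_simp
    _ ≤ r (K + i) := hgeom

theorem eventually_pow_le_of_tendsto_rpow_inv {P : ℕ → ℝ} {b : ℝ} (hb0 : 0 ≤ b) (hb : b < 1)
    (hP : ∀ᶠ k in atTop, 0 < P k)
    (hlim : Tendsto (fun k : ℕ => P k ^ ((1 : ℝ) / k)) atTop (𝓝 1)) :
    ∀ᶠ k in atTop, b ^ k ≤ P k := by
  filter_upwards [hlim.eventually (eventually_ge_nhds hb), hP, eventually_ne_atTop 0]
    with k hbk hPk hk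
  calc b ^ k ≤ (P k ^ ((1 : ℝ) / k)) ^ k := pow_le_pow_left₀ hb0 hbk k
    _ = P k := by
      rw [← Real.rpow_natCast, ← Real.rpow_mul hPk.le, one_div,
        inv_mul_cancel₀ (by exact_mod_cast hk), Real.rpow_one]

theorem tendsto_mul_atTop_of_tendsto_rpow_inv {P r : ℕ → ℝ} {c : ℝ} (hP : ∀ᶠ k in atTop, 0 < P k)
    (hlim : Tendsto (fun k : ℕ => P k ^ ((1 : ℝ) / k)) atTop (𝓝 1)) (hc : 0 < c)
    (hr : ∀ᶠ k in atTop, c * 2 ^ k ≤ r k) : Tendsto (fun k => P k * r k) atTop atTop := by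
  refine tendsto_atTop_mono' _ ?_
    ((tendsto_pow_atTop_atTop_of_one_lt (by norm_num : (1 : ℝ) < 3 / 2)).atTop_mul_const hc)
  filter_upwards [eventually_pow_le_of_tendsto_rpow_inv (b := 3 / 4) (by norm_num) (by norm_num)
    hP hlim, hr] with k hPk hrk
  calc (3 / 2 : ℝ) ^ k * c = (3 / 4) ^ k * (c * 2 ^ k) := by
        rw [show (3 / 2 : ℝ) = 3 / 4 * 2 by norm_num, mul_pow]; ring
    _ ≤ P k * r k := mul_le_mul hPk hrk (by positivity) ((pow_nonneg (by norm_num) k).trans hPk)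

theorem tendsto_div_succ_of_rec {N : ℕ} {P r : ℕ → ℝ} (hP : ∀ k, 1 ≤ k → 0 < P k)
    (hlim : Tendsto (fun k : ℕ => P k ^ ((1 : ℝ) / k)) atTop (𝓝 1))
    (hrpos : ∀ k, 1 ≤ k → 0 < r k) (hr2 : ∀ᶠ k in atTop, 2 * r k ≤ r (k + 1))
    (hrec : ∀ k, 1 ≤ k → r (k + 1) = P k * r k ^ N * ∏ j ∈ Icc 1 k, (1 + r k / r j)) :
    Tendsto (fun k => r k / r (k + 1)) atTop (𝓝 0) := by
  have hP' : ∀ᶠ k in atTop, 0 < P k := eventually_atTop.2 ⟨1, hP⟩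
  obtain ⟨c, hc, hgrow⟩ := exists_pos_mul_two_pow_le (eventually_atTop.2 ⟨1, hrpos⟩) hr2
  have hPr := tendsto_mul_atTop_of_tendsto_rpow_inv hP' hlim hc hgrow
  have hr_top : Tendsto r atTop atTop := tendsto_atTop_mono' _ hgrow
    ((tendsto_pow_atTop_atTop_of_one_lt one_lt_two).const_mul_atTop hc)
  have hr1 := hrpos 1 le_rfl
  have hr2' := hrpos 2 one_le_two
  -- the factors `j = 1, 2` of the product already give `r (k + 1) / r k ≥ P k * r k / (r 1 * r 2)`
  have hquot : ∀ᶠ k in atTop, P k * r k / (r 1 * r 2) ≤ r (k + 1) / r k := by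
    filter_upwards [hr_top.eventually_ge_atTop 1, eventually_ge_atTop 2] with k hrk1 hk2
    have hrk : 0 < r k := by linarith
    have hfactor : ∀ j ∈ Icc 1 k, 1 ≤ 1 + r k / r j := fun j hj =>
      le_add_of_nonneg_right (div_pos hrk (hrpos j (mem_Icc.1 hj).1)).le
    have hsub : ({1, 2} : Finset ℕ) ⊆ Icc 1 k := by
      intro j; simp only [mem_insert, mem_singleton, mem_Icc]; omega
    have hprod : r k / r 1 * (r k / r 2) ≤ ∏ j ∈ Icc 1 k, (1 + r k / r j) :=
      calc r k / r 1 * (r k / r 2) ≤ ∏ j ∈ {1, 2}, (1 + r k / r j) := by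
            rw [prod_pair (by norm_num)]
            gcongr <;> linarith
        _ ≤ ∏ j ∈ Icc 1 k, (1 + r k / r j) :=
            prod_le_prod_of_subset_of_one_le hsub
              (fun j hj => zero_le_one.trans (hfactor j (hsub hj))) fun j hj _ => hfactor j hj
    rw [hrec k (by omega), le_div_iff₀ hrk]
    calc P k * r k / (r 1 * r 2) * r k = P k * 1 * (r k / r 1 * (r k / r 2)) := by
          field_simp
      _ ≤ P k * r k ^ N * ∏ j ∈ Icc 1 k, (1 + r k / r j) := by
          have := hP k (by omega)
          gcongr
          · exact one_le_pow₀ hrk1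
  have hquot_top := tendsto_atTop_mono' _ hquot (hPr.atTop_div_const (by positivity))
  exact hquot_top.inv_tendsto_atTop.congr fun k => by simp only [Pi.inv_apply, inv_div]

theorem norm_tprod_bounds_of_sum_le {s : ℕ → ℝ} {b : ℕ → ℂ} (hs : ∀ m, 0 < s m)
    (hb : ∀ m, ‖b m‖ = s m) {k : ℕ} {w : ℂ} (hmul : Multipliable fun m => 1 - w * b k / b m)
    {α β D : ℝ} (hα : 0 < α) (hαw : α ≤ ‖w‖) (hwβ : ‖w‖ ≤ β) (hD : D < 1)
    (hsum : ∀ n, (1 + β) / α * ∑ m ∈ range k, s m / s k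
      + β * ∑ m ∈ Ico (k + 1) n, s k / s m ≤ D) :
    (1 - D) * (‖w‖ ^ k * ‖w - 1‖ * ∏ m ∈ range k, (1 + s k / s m))
        ≤ ‖∏' m, (1 - w * b k / b m)‖ ∧
      ‖∏' m, (1 - w * b k / b m)‖
        ≤ (1 - D)⁻¹ * (‖w‖ ^ k * ‖w - 1‖ * ∏ m ∈ range k, (1 + s k / s m)) := by
  set ρ := ‖w‖
  have hβ : 0 < β := (hα.trans_le hαw).trans_le hwβ
  have hbk : b k ≠ 0 := norm_pos_iff.1 ((hb k).symm ▸ hs k)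
  have hu : ∀ m, ‖w * b k / b m‖ = ρ * (s k / s m) := fun m => by
    rw [norm_div, norm_mul, hb, hb, mul_div_assoc]
  set t : ℕ → ℝ := fun m => if m < k then ρ * (1 + s k / s m) else if m = k then ‖w - 1‖ else 1
  set d : ℕ → ℝ := fun m =>
    if m < k then (1 + β) / α * (s m / s k) else if m = k then 0 else β * (s k / s m)
  have ht0 : ∀ m, 0 ≤ t m := fun m => by
    have := hs m; have := hs k; simp only [t]; split_ifs <;> positivity
  have hd0 : ∀ m, 0 ≤ d m := fun m => by
    have := hs m; have := hs k; simp only [d]; split_ifs <;> positivity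
  have ht : HasProd t (ρ ^ k * ‖w - 1‖ * ∏ m ∈ range k, (1 + s k / s m)) := by
    have hprod : ∏ m ∈ range (k + 1), t m = ρ ^ k * ‖w - 1‖ * ∏ m ∈ range k, (1 + s k / s m) := by
      rw [prod_range_succ, prod_congr rfl fun m hm => if_pos (mem_range.1 hm), prod_mul_distrib,
        prod_const, card_range]
      simp only [t, lt_irrefl, if_false, if_true]
      ring
    exact hprod ▸ hasProd_prod_of_ne_finset_one fun m hm => by
      simp only [t, mem_range] at hm ⊢; rw [if_neg (by omega), if_neg (by omega)]
  have hGt : ∀ m, |‖1 - w * b k / b m‖ - t m| ≤ d m * t m := by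
    intro m
    rcases lt_trichotomy m k with hmk | rfl | hkm
    · simp only [t, d, if_pos hmk]
      rw [← inv_div (s k)]
      exact abs_norm_one_sub_sub_le (hu m) hα hαw hwβ (div_pos (hs k) (hs m))
    · simp [t, d, mul_div_assoc, div_self hbk, norm_sub_rev]
    · simp only [t, d, if_neg (by omega : ¬m < k), if_neg hkm.ne', mul_one]
      calc |‖1 - w * b k / b m‖ - 1| ≤ ‖w * b k / b m‖ := by
            simpa using abs_norm_sub_norm_le (1 - w * b k / b m) 1
        _ ≤ β * (s k / s m) := by
            rw [hu]; exact mul_le_mul_of_nonneg_right hwβ (div_pos (hs k) (hs m)).le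
  have hdsum : ∀ᶠ n in atTop, ∑ m ∈ range n, d m ≤ D := by
    filter_upwards [eventually_gt_atTop k] with n hn
    have hlow : ∑ m ∈ range k, d m = (1 + β) / α * ∑ m ∈ range k, s m / s k := by
      rw [mul_sum]; exact sum_congr rfl fun m hm => if_pos (mem_range.1 hm)
    have hhigh : ∑ m ∈ Ico (k + 1) n, d m = β * ∑ m ∈ Ico (k + 1) n, s k / s m := by
      rw [mul_sum]
      refine sum_congr rfl fun m hm => ?_
      have := (mem_Ico.1 hm).1
      simp only [d]; rw [if_neg (by omega), if_neg (by omega)]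
    rw [← sum_range_add_sum_Ico _ hn, sum_range_succ, hlow, hhigh]
    simpa [d] using hsum n
  exact hmul.hasProd.norm.bounds_of_abs_sub_le ht hd0 ht0 hGt hdsum hD

theorem eventually_norm_tprod_bounds {s : ℕ → ℝ} {b : ℕ → ℂ} (hs : ∀ m, 0 < s m)
    (hb : ∀ m, ‖b m‖ = s m) (hmul : ∀ z, Multipliable fun m => 1 - z / b m)
    (hratio : Tendsto (fun k => s k / s (k + 1)) atTop (𝓝 0)) {α β ε : ℝ} (hα : 0 < α)
    (hε : 0 < ε) :
    ∀ᶠ k in atTop, ∀ w : ℂ, α ≤ ‖w‖ → ‖w‖ ≤ β →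
      (1 - ε) * (‖w‖ ^ k * ‖w - 1‖ * ∏ m ∈ range k, (1 + s k / s m))
          ≤ ‖∏' m, (1 - w * b k / b m)‖ ∧
        ‖∏' m, (1 - w * b k / b m)‖
          ≤ (1 + ε) * (‖w‖ ^ k * ‖w - 1‖ * ∏ m ∈ range k, (1 + s k / s m)) := by
  set D := ε / (1 + ε)
  have hD0 : 0 < D := by positivity
  have hD1 : D < 1 := (div_lt_one (by linarith)).2 (by linarith)
  have hDε : 1 - ε ≤ 1 - D := by
    have : D ≤ ε := div_le_self hε.le (by linarith)
    linarith
  have hDinv : (1 - D)⁻¹ = 1 + ε := by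
    simp only [D]; field_simp; ring
  have hsmall : ∀ᶠ k in atTop, (1 + β) / α * ∑ m ∈ range k, s m / s k
      + β * (2 * (s k / s (k + 1))) ≤ D := by
    have h := ((tendsto_sum_range_div_of_tendsto_div_succ hs hratio).const_mul ((1 + β) / α)).add
      ((hratio.const_mul 2).const_mul β)
    simp only [mul_zero, add_zero] at h
    exact h.eventually (eventually_le_nhds hD0)
  obtain ⟨K, hK⟩ := eventually_atTop.1 (hratio.eventually (eventually_le_nhds one_half_pos))
  filter_upwards [hsmall, eventually_ge_atTop K] with k hk hKk w hαw hwβ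
  have hβ : 0 ≤ β := (hα.le.trans hαw).trans hwβ
  have htail : ∀ n, ∑ m ∈ Ico (k + 1) n, s k / s m ≤ 2 * (s k / s (k + 1)) := by
    refine sum_Ico_le_two_mul_of_two_mul_succ_le (fun m => (div_pos (hs k) (hs m)).le)
      fun m hm => ?_
    have h := hK m (by omega)
    rw [div_le_iff₀ (hs _)] at h
    rw [mul_div_assoc', div_le_div_iff₀ (hs _) (hs _)]
    nlinarith [hs k]
  have hE : 0 ≤ ‖w‖ ^ k * ‖w - 1‖ * ∏ m ∈ range k, (1 + s k / s m) :=
    mul_nonneg (by positivity) (prod_nonneg fun m _ => (by have := hs m; have := hs k; positivity))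
  obtain ⟨hlow, hhigh⟩ := norm_tprod_bounds_of_sum_le hs hb (hmul _) hα hαw hwβ hD1
    fun n => hk.trans' (add_le_add le_rfl (mul_le_mul_of_nonneg_left (htail n) hβ))
  exact ⟨(mul_le_mul_of_nonneg_right hDε hE).trans hlow, hDinv ▸ hhigh⟩

theorem stmt_3_general (N : ℕ) (C : ℂ)
    (P r : ℕ → ℝ)
    (hP : ∀ k, 1 ≤ k → 0 < P k)
    (hPlim : Tendsto (fun k : ℕ => (P k) ^ ((1 : ℝ) / k)) atTop (nhds 1))
    (hrpos : ∀ k, 1 ≤ k → 0 < r k)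
    (hr2 : ∀ᶠ k in atTop, 2 * r k ≤ r (k + 1))
    (hrec : ∀ k, 1 ≤ k →
      r (k + 1) = P k * (r k) ^ N * ∏ j ∈ Finset.Icc 1 k, (1 + r k / r j))
    (a : ℕ → ℂ) (ha : ∀ k, 1 ≤ k → ‖a k‖ = r k)
    (f : ℂ → ℂ)
    (hmul : ∀ z : ℂ, Multipliable (fun k : ℕ => 1 - z / a (k + 1)))
    (hf : ∀ z : ℂ, f z = C * z ^ N * ∏' k : ℕ, (1 - z / a (k + 1))) :
    ∀ α β : ℝ, 0 < α → α < β → ∀ ε : ℝ, 0 < ε → ∃ K : ℕ, ∀ k, K ≤ k →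
      ∀ w : ℂ, α ≤ ‖w‖ → ‖w‖ ≤ β →
        (1 - ε) * (‖C‖ * (‖w‖) ^ (k - 1 + N) * ‖w - 1‖ *
            r (k + 1) / (2 * P k)) ≤ ‖f (w * a k)‖ ∧
          ‖f (w * a k)‖ ≤
            (1 + ε) * (‖C‖ * (‖w‖) ^ (k - 1 + N) * ‖w - 1‖ *
              r (k + 1) / (2 * P k)) := by
  intro α β hα _ ε hε
  have hratio := (tendsto_div_succ_of_rec hP hPlim hrpos hr2 hrec).comp (tendsto_add_atTop_nat 1)
  obtain ⟨K, hK⟩ := eventually_atTop.1 <| eventually_norm_tprod_bounds (β := β)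
    (s := fun m => r (m + 1)) (fun m => hrpos _ m.succ_pos) (fun m => ha _ m.succ_pos) hmul
    hratio hα hε
  refine ⟨K + 1, fun k hk w hαw hwβ => ?_⟩
  obtain ⟨k, rfl⟩ : ∃ j, k = j + 1 := ⟨k - 1, by omega⟩
  have hrk := hrpos (k + 1) (by omega)
  have hnorm : ‖f (w * a (k + 1))‖
      = ‖C‖ * (‖w‖ * r (k + 1)) ^ N * ‖∏' m, (1 - w * a (k + 1) / a (m + 1))‖ := by
    rw [hf, norm_mul, norm_mul, norm_pow, norm_mul, ha _ (by omega)]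
  have hE : ‖C‖ * ‖w‖ ^ (k + 1 - 1 + N) * ‖w - 1‖ * r (k + 1 + 1) / (2 * P (k + 1))
      = ‖C‖ * (‖w‖ * r (k + 1)) ^ N
        * (‖w‖ ^ k * ‖w - 1‖ * ∏ m ∈ range k, (1 + r (k + 1) / r (m + 1))) := by
    have hIcc : ∏ j ∈ Icc 1 (k + 1), (1 + r (k + 1) / r j)
        = (∏ m ∈ range k, (1 + r (k + 1) / r (m + 1))) * 2 := by
      rw [← Ico_add_one_right_eq_Icc, prod_Ico_eq_prod_range, Nat.add_sub_cancel, prod_range_succ,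
        add_comm 1 k, div_self hrk.ne', one_add_one_eq_two]
      simp only [add_comm 1]
    have hPk := hP (k + 1) (by omega)
    rw [hrec (k + 1) (by omega), hIcc, Nat.add_sub_cancel]
    field_simp
    ring
  obtain ⟨hlow, hhigh⟩ := hK k (by omega) w hαw hwβ
  have hC : 0 ≤ ‖C‖ * (‖w‖ * r (k + 1)) ^ N := by positivity
  rw [hnorm, hE, mul_left_comm _ (‖C‖ * _), mul_left_comm _ (‖C‖ * _)]
  exact ⟨mul_le_mul_of_nonneg_left hlow hC, mul_le_mul_of_nonneg_left hhigh hC⟩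

/-- uniform asymptotics
`|f(w a_k)| ~ |C| |w|^{k-1+N} |w-1| r_{k+1} / (2 P_k)` on annuli `α ≤ |w| ≤ β`. -/
theorem stmt_3 (N : ℕ) (C : ℂ) (hC : C ≠ 0)
    (P r : ℕ → ℝ)
    (hP : ∀ k, 1 ≤ k → 0 < P k)
    (hPlim : Tendsto (fun k : ℕ => (P k) ^ ((1 : ℝ) / k)) atTop (nhds 1))
    (hrpos : ∀ k, 1 ≤ k → 0 < r k)
    (hr2 : ∀ᶠ k in atTop, 2 * r k ≤ r (k + 1))
    (hrec : ∀ k, 1 ≤ k →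
      r (k + 1) = P k * (r k) ^ N * ∏ j ∈ Finset.Icc 1 k, (1 + r k / r j))
    (a : ℕ → ℂ) (ha : ∀ k, 1 ≤ k → ‖a k‖ = r k)
    (f : ℂ → ℂ)
    (hmul : ∀ z : ℂ, Multipliable (fun k : ℕ => 1 - z / a (k + 1)))
    (hf : ∀ z : ℂ, f z = C * z ^ N * ∏' k : ℕ, (1 - z / a (k + 1))) :
    ∀ α β : ℝ, 0 < α → α < β → ∀ ε : ℝ, 0 < ε → ∃ K : ℕ, ∀ k, K ≤ k →
      ∀ w : ℂ, α ≤ ‖w‖ → ‖w‖ ≤ β →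
        (1 - ε) * (‖C‖ * (‖w‖) ^ (k - 1 + N) * ‖w - 1‖ *
            r (k + 1) / (2 * P k)) ≤ ‖f (w * a k)‖ ∧
          ‖f (w * a k)‖ ≤
            (1 + ε) * (‖C‖ * (‖w‖) ^ (k - 1 + N) * ‖w - 1‖ *
              r (k + 1) / (2 * P k)) :=
  stmt_3_general N C P r hP hPlim hrpos hr2 hrec a ha f hmul hf
end

section
/- If limsup_{k→∞} k P_k > |C|/(2e), then there exists ε > 0 such that for infinitely many k, k·r_k < |f(c_k)| < (1−ε) r_{k+1}. -/
/-!
Write `z = c k`, `u = ‖z‖ / r k` and `Q = ∏_{1 ≤ j < k} (1 + r k / r j)`, so that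
`r (k+1) = 2 P k r k ^ N Q`. Since `P k ≥ (3/4)^k` eventually, the recursion gives
`r (k+1) / r k ≥ (3/2)^k / (2 r 1)`: the zeros are so sparse that in
`‖f z‖ = ‖C‖ ‖z‖^N ∏ ‖1 - z / a j‖` the factors with `j > k` tend to `1`, while
`∏_{j<k} (1 + ‖z‖ / r j) ≤ Q exp ((k - 1) (u - 1) + o(1))`. As `k (u - 1) → -1` and
`k ‖1 - z / a k‖ → 1`, this gives `‖f (c k)‖ ≤ (‖C‖/(2e) + o(1)) r (k+1) / (k P k)`, which is
`< (1 - ε) r (k+1)` whenever `k P k` exceeds a fixed `β > ‖C‖/(2e)`. The lower bound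
`‖f (c k)‖ > k r k` holds for all large `k`: the factors `j = 1` and `j = k - 1` alone give
`≳ (r k / r 1) (r k / r (k-1))`, and `r k / r (k-1)` outgrows every power of `k`.
-/

open Filter Finset Topology

namespace LacunaryCriticalValues

section Growth

variable {r : ℕ → ℝ} {K : ℕ}

theorem two_pow_mul_le_of_two_mul_le (h2 : ∀ k ≥ K, 2 * r k ≤ r (k + 1)) {i j : ℕ}
    (hi : K ≤ i) (hij : i ≤ j) : 2 ^ (j - i) * r i ≤ r j := by
  induction j, hij using Nat.le_induction with
  | base => simp
  | succ n hin ih =>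
    rw [Nat.sub_add_comm hin, pow_succ]
    linarith [h2 n (hi.trans hin)]

theorem pos_of_two_mul_le (hpos : 0 < r K) (h2 : ∀ k ≥ K, 2 * r k ≤ r (k + 1)) {i : ℕ}
    (hi : K ≤ i) : 0 < r i := by
  induction i, hi using Nat.le_induction with
  | base => exact hpos
  | succ n hKn ih => linarith [h2 n hKn]

theorem tendsto_atTop_of_two_mul_le (hpos : ∀ᶠ k in atTop, 0 < r k)
    (h2 : ∀ᶠ k in atTop, 2 * r k ≤ r (k + 1)) : Tendsto r atTop atTop := by
  obtain ⟨K, hK⟩ := eventually_atTop.1 (hpos.and h2)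
  refine tendsto_atTop_mono' _ ?_ (((tendsto_pow_atTop_atTop_of_one_lt one_lt_two).comp
    (tendsto_sub_atTop_nat K)).atTop_mul_const (hK K le_rfl).1)
  filter_upwards [eventually_ge_atTop K] with k hk
  exact two_pow_mul_le_of_two_mul_le (fun i hi => (hK i hi).2) le_rfl hk

theorem eventually_forall_lt_two_mul_le (hpos : ∀ᶠ k in atTop, 0 < r k)
    (h2 : ∀ᶠ k in atTop, 2 * r k ≤ r (k + 1)) : ∀ᶠ k in atTop, ∀ j < k, 2 * r j ≤ r k := by
  have hr := tendsto_atTop_of_two_mul_le hpos h2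
  obtain ⟨K, hK⟩ := eventually_atTop.1 (hpos.and h2)
  filter_upwards [(eventually_all_finset (range K)).2 fun j _ => hr.eventually_ge_atTop (2 * r j)]
    with k hsmall j hjk
  rcases lt_or_ge j K with hjK | hKj
  · exact hsmall j (mem_range.2 hjK)
  · calc 2 * r j = 2 ^ 1 * r j := by ring
      _ ≤ 2 ^ (k - j) * r j := by
        gcongr
        exacts [(hK j hKj).1.le, one_le_two, by omega]
      _ ≤ r k := two_pow_mul_le_of_two_mul_le (fun i hi => (hK i hi).2) hKj hjk.le

theorem eventually_forall_lt_le_pred (hpos : ∀ᶠ k in atTop, 0 < r k)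
    (h2 : ∀ᶠ k in atTop, 2 * r k ≤ r (k + 1)) : ∀ᶠ k in atTop, ∀ j < k, r j ≤ r (k - 1) := by
  filter_upwards [(tendsto_sub_atTop_nat 1).eventually (eventually_forall_lt_two_mul_le hpos h2),
    (tendsto_sub_atTop_nat 1).eventually hpos] with k hdom hk j hj
  rcases (Nat.le_sub_one_of_lt hj).lt_or_eq with hjk | rfl
  · linarith [hdom j hjk]
  · rfl

theorem sum_Ico_inv_le_of_two_mul_le (hpos : 0 < r K) (h2 : ∀ k ≥ K, 2 * r k ≤ r (k + 1))
    (n : ℕ) : ∑ i ∈ Ico K n, (r i)⁻¹ ≤ 2 * (r K)⁻¹ := by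
  rcases lt_or_ge n K with hn | hn
  · simp [Ico_eq_empty_of_le hn.le, hpos.le]
  -- telescoping: each new term `(r n)⁻¹` is paid for by `2 (r n)⁻¹ - 2 (r (n+1))⁻¹`
  have key : ∑ i ∈ Ico K n, (r i)⁻¹ ≤ 2 * (r K)⁻¹ - 2 * (r n)⁻¹ := by
    induction n, hn using Nat.le_induction with
    | base => simp
    | succ n hKn ih =>
      rw [sum_Ico_succ_top hKn]
      have hrn := pos_of_two_mul_le hpos h2 hKn
      have : 2 * (r (n + 1))⁻¹ ≤ (r n)⁻¹ := by
        rw [← div_eq_mul_inv, div_le_iff₀ (by linarith [h2 n hKn]), inv_mul_eq_div,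
          le_div_iff₀ hrn]
        linarith [h2 n hKn]
      linarith
  linarith [inv_pos.2 (pos_of_two_mul_le hpos h2 hn)]

theorem eventually_pow_le_of_tendsto_rpow {P : ℕ → ℝ} (hP : ∀ᶠ k in atTop, 0 ≤ P k)
    (hlim : Tendsto (fun k : ℕ => P k ^ ((1 : ℝ) / k)) atTop (𝓝 1)) {q : ℝ} (hq0 : 0 ≤ q)
    (hq : q < 1) : ∀ᶠ k in atTop, q ^ k ≤ P k := by
  filter_upwards [hlim.eventually (eventually_ge_nhds hq), hP, eventually_ge_atTop 1]
    with k hqk hPk hk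
  calc q ^ k ≤ (P k ^ ((1 : ℝ) / k)) ^ k := by gcongr
    _ = P k := by rw [one_div, Real.rpow_inv_natCast_pow hPk (by omega)]

theorem div_mul_two_pow_le_prod {k : ℕ} (hk : 1 ≤ k) (hpos : ∀ j ∈ Icc 1 k, 0 < r j)
    (hle : ∀ j ∈ Icc 1 k, r j ≤ r k) :
    r k / r 1 * 2 ^ (k - 1) ≤ ∏ j ∈ Icc 1 k, (1 + r k / r j) := by
  rw [← Ioc_insert_left hk, prod_insert (by simp)]
  have h1 := hpos 1 (by simp [hk])
  have htail : 2 ^ (k - 1) ≤ ∏ j ∈ Ioc 1 k, (1 + r k / r j) := by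
    calc (2 : ℝ) ^ (k - 1) = ∏ _j ∈ Ioc 1 k, (2 : ℝ) := by simp
      _ ≤ _ := prod_le_prod (fun _ _ => zero_le_two) fun j hj => by
        have hj' : j ∈ Icc 1 k := Ioc_subset_Icc_self hj
        have := (one_le_div (hpos j hj')).2 (hle j hj')
        linarith
  have hk' := hpos k (by simp [hk])
  exact mul_le_mul (by linarith) htail (by positivity) (by positivity)

theorem eventually_div_succ_le {N : ℕ} {P : ℕ → ℝ} (hP : ∀ k, 1 ≤ k → 0 < P k)
    (hPlim : Tendsto (fun k : ℕ => P k ^ ((1 : ℝ) / k)) atTop (𝓝 1))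
    (hrpos : ∀ k, 1 ≤ k → 0 < r k) (hr2 : ∀ᶠ k in atTop, 2 * r k ≤ r (k + 1))
    (hrec : ∀ k, 1 ≤ k → r (k + 1) = P k * r k ^ N * ∏ j ∈ Icc 1 k, (1 + r k / r j)) :
    ∀ᶠ k in atTop, r k / r (k + 1) ≤ 2 * r 1 * (2 / 3 : ℝ) ^ k := by
  have hpos : ∀ᶠ k in atTop, 0 < r k := eventually_atTop.2 ⟨1, hrpos⟩
  have hP' : ∀ᶠ k in atTop, 0 ≤ P k := by
    filter_upwards [eventually_ge_atTop 1] with k hk using (hP k hk).le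
  filter_upwards [eventually_pow_le_of_tendsto_rpow hP' hPlim (q := 3 / 4) (by norm_num)
    (by norm_num), eventually_forall_lt_two_mul_le hpos hr2,
    (tendsto_atTop_of_two_mul_le hpos hr2).eventually_ge_atTop 1, eventually_ge_atTop 1]
    with k hPk hdk hrk hk
  have hr1 := hrpos 1 le_rfl
  have hrk0 := hrpos k hk
  have hQ := div_mul_two_pow_le_prod hk (fun j hj => hrpos j (mem_Icc.1 hj).1) fun j hj => by
    rcases (mem_Icc.1 hj).2.lt_or_eq with hjk | rfl
    · linarith [hdk j hjk, hrpos j (mem_Icc.1 hj).1]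
    · rfl
  have hlow : (3 / 4 : ℝ) ^ k * (r k / r 1 * 2 ^ (k - 1)) ≤ r (k + 1) := by
    rw [hrec k hk]
    have := one_le_pow₀ (n := N) hrk
    calc (3 / 4 : ℝ) ^ k * (r k / r 1 * 2 ^ (k - 1))
        ≤ P k * (1 * ∏ j ∈ Icc 1 k, (1 + r k / r j)) := by
          rw [one_mul]; exact mul_le_mul hPk hQ (by positivity) (hP k hk).le
      _ ≤ P k * (r k ^ N * ∏ j ∈ Icc 1 k, (1 + r k / r j)) := by
        gcongr
        · exact (hP k hk).le
        · exact prod_nonneg fun j hj => by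
            have := hrpos j (mem_Icc.1 hj).1; positivity
      _ = _ := by ring
  have hpow : (3 / 4 : ℝ) ^ k * 2 ^ (k - 1) * (2 * (2 / 3) ^ k) = 1 := by
    obtain ⟨m, rfl⟩ : ∃ m, k = m + 1 := ⟨k - 1, by omega⟩
    rw [Nat.add_sub_cancel, show (3 / 4 : ℝ) ^ (m + 1) * 2 ^ m * (2 * (2 / 3) ^ (m + 1))
      = ((3 / 4) * 2 * (2 / 3)) ^ m * ((3 / 4) * (2 * (2 / 3))) by rw [mul_pow, mul_pow]; ring]
    norm_num
  rw [div_le_iff₀ (hrpos (k + 1) (by omega))]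
  calc r k = r k / r 1 * r 1 * ((3 / 4 : ℝ) ^ k * 2 ^ (k - 1) * (2 * (2 / 3) ^ k)) := by
        rw [hpow, div_mul_cancel₀ _ hr1.ne', mul_one]
    _ = 2 * r 1 * (2 / 3 : ℝ) ^ k * ((3 / 4 : ℝ) ^ k * (r k / r 1 * 2 ^ (k - 1))) := by ring
    _ ≤ 2 * r 1 * (2 / 3 : ℝ) ^ k * r (k + 1) := by gcongr

theorem tendsto_succ_sq_mul_div_succ {N : ℕ} {P : ℕ → ℝ} (hP : ∀ k, 1 ≤ k → 0 < P k)
    (hPlim : Tendsto (fun k : ℕ => P k ^ ((1 : ℝ) / k)) atTop (𝓝 1))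
    (hrpos : ∀ k, 1 ≤ k → 0 < r k) (hr2 : ∀ᶠ k in atTop, 2 * r k ≤ r (k + 1))
    (hrec : ∀ k, 1 ≤ k → r (k + 1) = P k * r k ^ N * ∏ j ∈ Icc 1 k, (1 + r k / r j)) :
    Tendsto (fun k : ℕ => ((k : ℝ) + 1) ^ 2 * (r k / r (k + 1))) atTop (𝓝 0) := by
  have hgeom : Tendsto (fun k : ℕ => 2 * r 1 * (3 / 2) * (((k + 1 : ℕ) : ℝ) ^ 2 *
      (2 / 3 : ℝ) ^ (k + 1))) atTop (𝓝 (2 * r 1 * (3 / 2) * 0)) :=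
    ((tendsto_add_atTop_iff_nat 1).2 (tendsto_pow_const_mul_const_pow_of_abs_lt_one 2
      (by rw [abs_of_pos (by norm_num)]; norm_num))).const_mul _
  rw [mul_zero] at hgeom
  refine squeeze_zero' ?_ ?_ hgeom
  · filter_upwards [eventually_ge_atTop 1] with k hk
    have := hrpos k hk
    have := hrpos (k + 1) (by omega)
    positivity
  · filter_upwards [eventually_div_succ_le hP hPlim hrpos hr2 hrec] with k hk
    calc ((k : ℝ) + 1) ^ 2 * (r k / r (k + 1)) ≤ ((k : ℝ) + 1) ^ 2 * (2 * r 1 * (2 / 3) ^ k) := by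
          gcongr
      _ = _ := by push_cast; ring

theorem tendsto_div_succ_of_succ_sq_mul (hrpos : ∀ k, 1 ≤ k → 0 < r k)
    (h : Tendsto (fun k : ℕ => ((k : ℝ) + 1) ^ 2 * (r k / r (k + 1))) atTop (𝓝 0)) :
    Tendsto (fun k => r k / r (k + 1)) atTop (𝓝 0) := by
  refine squeeze_zero' ?_ ?_ h
  · filter_upwards [eventually_ge_atTop 1] with k hk
    exact (div_pos (hrpos k hk) (hrpos (k + 1) (by omega))).le
  · filter_upwards [eventually_ge_atTop 1] with k hk
    exact le_mul_of_one_le_left (div_pos (hrpos k hk) (hrpos (k + 1) (by omega))).le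
      (one_le_pow₀ (by linarith [k.cast_nonneg (α := ℝ)]))

end Growth

section Products

theorem one_sub_sum_le_prod_one_sub {ι R : Type*} [CommRing R] [LinearOrder R]
    [IsStrictOrderedRing R] (s : Finset ι) {x : ι → R} (h0 : ∀ i ∈ s, 0 ≤ x i)
    (h1 : ∀ i ∈ s, x i ≤ 1) : 1 - ∑ i ∈ s, x i ≤ ∏ i ∈ s, (1 - x i) := by
  classical
  induction s using Finset.induction_on with
  | empty => simp
  | insert j s hj ih =>
    rw [sum_insert hj, prod_insert hj]
    have hxj0 := h0 j (mem_insert_self j s)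
    have hxj1 := h1 j (mem_insert_self j s)
    have ih' := ih (fun i hi => h0 i (mem_insert_of_mem hi)) fun i hi => h1 i (mem_insert_of_mem hi)
    have hsum : 0 ≤ ∑ i ∈ s, x i := sum_nonneg fun i hi => h0 i (mem_insert_of_mem hi)
    nlinarith [mul_le_mul_of_nonneg_left ih' (sub_nonneg.2 hxj1), mul_nonneg hxj0 hsum]

theorem prod_Ico_eq_mul_mul_prod_Ico {M : Type*} [CommMonoid M] (g : ℕ → M) {m k n : ℕ}
    (hmk : m ≤ k) (hkn : k < n) :
    ∏ i ∈ Ico m n, g i = (∏ i ∈ Ico m k, g i) * g k * ∏ i ∈ Ico (k + 1) n, g i := by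
  rw [← prod_Ico_consecutive g hmk hkn.le, prod_eq_prod_Ico_succ_bot hkn, mul_assoc]

theorem mul_le_prod_of_one_le {ι R : Type*} [CommSemiring R] [PartialOrder R]
    [IsOrderedRing R] {s : Finset ι} {f : ι → R} (hf : ∀ i ∈ s, 1 ≤ f i) {i j : ι} (hi : i ∈ s)
    (hj : j ∈ s) (hij : i ≠ j) : f i * f j ≤ ∏ l ∈ s, f l := by
  classical
  rw [← prod_pair hij]
  have hsub : {i, j} ⊆ s := insert_subset hi (singleton_subset_iff.2 hj)
  exact prod_le_prod_of_subset_of_one_le hsub (fun l hl => zero_le_one.trans (hf l (hsub hl)))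
    fun l hl _ => hf l hl

theorem one_add_mul_le_mul_exp (v : ℝ) {x : ℝ} (hx : 0 ≤ x) :
    1 + v * x ≤ (1 + x) * Real.exp ((v - 1) + |v - 1| / (1 + x)) := by
  have hx1 : 0 < 1 + x := by linarith
  calc 1 + v * x = (1 + x) * ((v - 1) * x / (1 + x) + 1) := by field_simp; ring
    _ ≤ (1 + x) * Real.exp ((v - 1) * x / (1 + x)) := by gcongr; exact Real.add_one_le_exp _
    _ ≤ (1 + x) * Real.exp ((v - 1) + |v - 1| / (1 + x)) := by
      gcongr
      rw [show (v - 1) * x / (1 + x) = (v - 1) + -(v - 1) / (1 + x) by field_simp; ring]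
      gcongr
      exact neg_le_abs _

theorem prod_one_add_div_le {r : ℕ → ℝ} (s : Finset ℕ) (hpos : ∀ i ∈ s, 0 < r i) {R t : ℝ}
    (hR : 0 < R) (ht : 0 ≤ t) :
    ∏ i ∈ s, (1 + t / r i) ≤ (∏ i ∈ s, (1 + R / r i)) *
      Real.exp (#s * (t / R - 1) + |t / R - 1| * ∑ i ∈ s, r i / R) := by
  have hfac : ∀ i ∈ s,
      1 + t / r i ≤ (1 + R / r i) * Real.exp ((t / R - 1) + |t / R - 1| * (r i / R)) := by
    intro i hi
    have hri := hpos i hi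
    calc 1 + t / r i = 1 + t / R * (R / r i) := by field_simp
      _ ≤ (1 + R / r i) * Real.exp ((t / R - 1) + |t / R - 1| / (1 + R / r i)) :=
        one_add_mul_le_mul_exp _ (by positivity)
      _ ≤ _ := by
        gcongr
        rw [div_eq_mul_inv]
        gcongr
        rw [inv_le_comm₀ (by positivity) (by positivity), inv_div]
        linarith
  calc ∏ i ∈ s, (1 + t / r i)
      ≤ ∏ i ∈ s, ((1 + R / r i) * Real.exp ((t / R - 1) + |t / R - 1| * (r i / R))) :=
        prod_le_prod (fun i hi => by have := hpos i hi; positivity) hfac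
    _ = _ := by
      rw [prod_mul_distrib, ← Real.exp_sum, sum_add_distrib, ← mul_sum, sum_const, nsmul_eq_mul]

variable {b : ℕ → ℂ}

theorem tendsto_prod_Ico_norm (hb : Multipliable fun j => 1 - b (j + 1)) :
    Tendsto (fun n => ∏ i ∈ Ico 1 n, ‖1 - b i‖) atTop (𝓝 ‖∏' j, (1 - b (j + 1))‖) := by
  refine (tendsto_add_atTop_iff_nat 1).1 ?_
  have := (continuous_norm.tendsto _).comp hb.hasProd.tendsto_prod_nat
  simp only [Function.comp_def, norm_prod] at this
  refine this.congr fun n => ?_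
  rw [prod_Ico_eq_prod_range, Nat.add_sub_cancel]
  simp only [add_comm 1]

theorem norm_tprod_le (hb : Multipliable fun j => 1 - b (j + 1)) {k : ℕ} (hk : 1 ≤ k) {T : ℝ}
    (hT : ∀ n, ∑ i ∈ Ico (k + 1) n, ‖b i‖ ≤ T) :
    ‖∏' j, (1 - b (j + 1))‖ ≤ (∏ i ∈ Ico 1 k, (1 + ‖b i‖)) * ‖1 - b k‖ * Real.exp T := by
  refine le_of_tendsto (tendsto_prod_Ico_norm hb) ?_
  filter_upwards [eventually_gt_atTop k] with n hn
  have hnorm : ∀ i, ‖1 - b i‖ ≤ 1 + ‖b i‖ := fun i => by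
    simpa using norm_sub_le (1 : ℂ) (b i)
  rw [prod_Ico_eq_mul_mul_prod_Ico _ hk hn]
  gcongr
  · exact hnorm _
  · calc ∏ i ∈ Ico (k + 1) n, ‖1 - b i‖ ≤ ∏ i ∈ Ico (k + 1) n, (1 + ‖b i‖) :=
          prod_le_prod (fun _ _ => norm_nonneg _) fun i _ => hnorm i
      _ ≤ Real.exp (∑ i ∈ Ico (k + 1) n, ‖b i‖) :=
          Real.prod_one_add_le_exp_sum _ fun _ => norm_nonneg _
      _ ≤ Real.exp T := Real.exp_le_exp.2 (hT n)

theorem le_norm_tprod (hb : Multipliable fun j => 1 - b (j + 1)) {k : ℕ} (hk : 1 ≤ k)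
    (hhead : ∀ i ∈ Ico 1 k, 1 ≤ ‖b i‖) {T : ℝ} (hT : ∀ n, ∑ i ∈ Ico (k + 1) n, ‖b i‖ ≤ T)
    (hT1 : T ≤ 1) :
    (∏ i ∈ Ico 1 k, (‖b i‖ - 1)) * ‖1 - b k‖ * (1 - T) ≤ ‖∏' j, (1 - b (j + 1))‖ := by
  refine ge_of_tendsto (tendsto_prod_Ico_norm hb) ?_
  filter_upwards [eventually_gt_atTop k] with n hn
  rw [prod_Ico_eq_mul_mul_prod_Ico _ hk hn]
  have hsmall : ∀ i ∈ Ico (k + 1) n, ‖b i‖ ≤ 1 := fun i hi =>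
    (single_le_sum (fun j _ => norm_nonneg (b j)) hi).trans ((hT n).trans hT1)
  gcongr
  · exact fun i hi => sub_nonneg.2 (hhead i hi)
  · simpa [norm_sub_rev] using norm_sub_norm_le (b _) 1
  · calc 1 - T ≤ 1 - ∑ i ∈ Ico (k + 1) n, ‖b i‖ := by linarith [hT n]
      _ ≤ ∏ i ∈ Ico (k + 1) n, (1 - ‖b i‖) :=
          one_sub_sum_le_prod_one_sub _ (fun _ _ => norm_nonneg _) hsmall
      _ ≤ ∏ i ∈ Ico (k + 1) n, ‖1 - b i‖ :=
          prod_le_prod (fun i hi => sub_nonneg.2 (hsmall i hi)) fun i _ => by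
            simpa using norm_sub_norm_le (1 : ℂ) (b i)

end Products

section Asymptotics

theorem tendsto_zero_of_tendsto_natCast_mul {𝕜 : Type*} [RCLike 𝕜] {m : ℕ → ℕ}
    (hm : Tendsto m atTop atTop) {s : ℕ → 𝕜} {L : 𝕜}
    (h : Tendsto (fun k => (m k : 𝕜) * s k) atTop (𝓝 L)) : Tendsto s atTop (𝓝 0) := by
  have := h.mul ((tendsto_inv_atTop_nhds_zero_nat (𝕜 := 𝕜)).comp hm)
  rw [mul_zero] at this
  refine this.congr' ?_
  filter_upwards [hm.eventually_ne_atTop 0] with k hk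
  have : (m k : 𝕜) ≠ 0 := Nat.cast_ne_zero.2 hk
  simp only [Function.comp_apply]
  field_simp

theorem tendsto_natCast_mul_of_tendsto_add_mul {𝕜 : Type*} [RCLike 𝕜] (N : ℕ) {s : ℕ → 𝕜}
    {L : 𝕜} (h : Tendsto (fun k : ℕ => ((k : 𝕜) + N) * s k) atTop (𝓝 L)) :
    Tendsto (fun k : ℕ => (k : 𝕜) * s k) atTop (𝓝 L) := by
  have hs := tendsto_zero_of_tendsto_natCast_mul (tendsto_add_atTop_nat N) (by simpa using h)
  simpa using (h.sub (hs.const_mul (N : 𝕜))).congr fun k => by ring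

theorem tendsto_natCast_mul_norm_sub_one {w : ℕ → ℂ}
    (h : Tendsto (fun k : ℕ => (k : ℂ) * (1 - w k)) atTop (𝓝 1)) :
    Tendsto (fun k : ℕ => (k : ℝ) * (‖w k‖ - 1)) atTop (𝓝 (-1)) := by
  set s := fun k => 1 - w k
  have hs : Tendsto s atTop (𝓝 0) := tendsto_zero_of_tendsto_natCast_mul tendsto_id h
  have hw : Tendsto (fun k => ‖w k‖) atTop (𝓝 1) := by
    simpa [s] using ((tendsto_const_nhds (x := (1 : ℂ))).sub hs).norm
  -- `‖1 - s‖² - 1 = -2 re s + ‖s‖²`, and `k s → 1`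
  have hsq : Tendsto (fun k : ℕ => (k : ℝ) * (‖w k‖ ^ 2 - 1)) atTop (𝓝 (-2)) := by
    have hre := (Complex.continuous_re.tendsto _).comp h
    have hnorm := h.norm
    simp only [Function.comp_def, Complex.one_re, norm_one] at hre hnorm
    have hlim := (hre.const_mul (-2)).add (hnorm.mul hs.norm)
    rw [norm_zero, mul_zero, add_zero, mul_one] at hlim
    refine hlim.congr fun k => ?_
    have hwk : w k = 1 - s k := by simp [s]
    rw [hwk, Complex.sq_norm, Complex.normSq_sub, Complex.normSq_one, ← Complex.sq_norm,
      norm_mul, Complex.norm_natCast]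
    simp only [sub_sub_cancel, Complex.mul_re, Complex.natCast_re, Complex.natCast_im, zero_mul,
      sub_zero, neg_mul, one_mul, Complex.conj_re]
    ring
  have hlim := hsq.div (hw.add_const 1) (by norm_num)
  rw [show (-2 : ℝ) / (1 + 1) = -1 by norm_num] at hlim
  refine hlim.congr fun k => ?_
  have : 0 < ‖w k‖ + 1 := by positivity
  simp only [Pi.div_apply]
  field_simp
  ring

end Asymptotics

section Estimates

variable {a : ℕ → ℂ} {r : ℕ → ℝ} {z : ℂ} {k : ℕ}

theorem sum_Ico_norm_div_le (ha : ∀ k, 1 ≤ k → ‖a k‖ = r k) (hpos : 0 < r (k + 1))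
    (h2 : ∀ i ≥ k + 1, 2 * r i ≤ r (i + 1)) (n : ℕ) :
    ∑ i ∈ Ico (k + 1) n, ‖z / a i‖ ≤ 2 * ‖z‖ / r (k + 1) := by
  calc ∑ i ∈ Ico (k + 1) n, ‖z / a i‖ = ‖z‖ * ∑ i ∈ Ico (k + 1) n, (r i)⁻¹ := by
        rw [mul_sum]
        exact sum_congr rfl fun i hi => by
          rw [norm_div, ha i (by simp at hi; omega), div_eq_mul_inv]
    _ ≤ ‖z‖ * (2 * (r (k + 1))⁻¹) := by
        gcongr; exact sum_Ico_inv_le_of_two_mul_le hpos h2 n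
    _ = 2 * ‖z‖ / r (k + 1) := by ring

theorem norm_tprod_le_prod_mul_exp (ha : ∀ k, 1 ≤ k → ‖a k‖ = r k)
    (hrpos : ∀ k, 1 ≤ k → 0 < r k) (hmul : Multipliable fun j => 1 - z / a (j + 1)) (hk : 2 ≤ k)
    (hmono : ∀ i < k, r i ≤ r (k - 1)) (h2 : ∀ i ≥ k + 1, 2 * r i ≤ r (i + 1)) :
    ‖∏' j, (1 - z / a (j + 1))‖ ≤ (∏ i ∈ Ico 1 k, (1 + r k / r i)) * ‖1 - z / a k‖ *
      Real.exp (((k : ℝ) - 1) * (‖z‖ / r k - 1) +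
        |‖z‖ / r k - 1| * ((k : ℝ) ^ 2 * (r (k - 1) / r k)) + 2 * ‖z‖ / r (k + 1)) := by
  have hrk := hrpos k (by omega)
  have hpos : ∀ i ∈ Ico 1 k, 0 < r i := fun i hi => hrpos i (mem_Ico.1 hi).1
  have hhead := prod_one_add_div_le (Ico 1 k) hpos hrk (norm_nonneg z)
  rw [prod_congr rfl fun i hi => by rw [← ha i (mem_Ico.1 hi).1, ← norm_div]] at hhead
  have hcard : ((Ico 1 k).card : ℝ) = k - 1 := by simp [Nat.cast_sub (by omega : 1 ≤ k)]
  have hsum : ∑ i ∈ Ico 1 k, r i / r k ≤ (k : ℝ) ^ 2 * (r (k - 1) / r k) := by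
    calc ∑ i ∈ Ico 1 k, r i / r k ≤ ∑ _i ∈ Ico 1 k, r (k - 1) / r k :=
          sum_le_sum fun i hi => by gcongr; exact hmono i (mem_Ico.1 hi).2
      _ = ((k : ℝ) - 1) * (r (k - 1) / r k) := by rw [sum_const, nsmul_eq_mul, hcard]
      _ ≤ _ := by
        have := hrpos (k - 1) (by omega)
        gcongr
        nlinarith [(k.one_le_cast (α := ℝ)).2 (by omega : 1 ≤ k)]
  calc ‖∏' j, (1 - z / a (j + 1))‖
      ≤ (∏ i ∈ Ico 1 k, (1 + ‖z / a i‖)) * ‖1 - z / a k‖ * Real.exp (2 * ‖z‖ / r (k + 1)) :=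
        norm_tprod_le (b := fun i => z / a i) hmul (by omega)
          (sum_Ico_norm_div_le ha (hrpos (k + 1) (by omega)) h2)
    _ ≤ ((∏ i ∈ Ico 1 k, (1 + r k / r i)) * Real.exp (((k : ℝ) - 1) * (‖z‖ / r k - 1) +
          |‖z‖ / r k - 1| * ((k : ℝ) ^ 2 * (r (k - 1) / r k)))) * ‖1 - z / a k‖ *
          Real.exp (2 * ‖z‖ / r (k + 1)) := by
        gcongr
        refine hhead.trans ?_
        rw [hcard]
        gcongr
        exact prod_nonneg fun i hi => by have := hpos i hi; positivity
    _ = _ := by simp only [Real.exp_add]; ring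

theorem le_norm_tprod_of_two_mul_le (ha : ∀ k, 1 ≤ k → ‖a k‖ = r k)
    (hrpos : ∀ k, 1 ≤ k → 0 < r k) (hmul : Multipliable fun j => 1 - z / a (j + 1)) (hk : 3 ≤ k)
    (hmono : ∀ i < k, r i ≤ r (k - 1)) (h2 : ∀ i ≥ k + 1, 2 * r i ≤ r (i + 1))
    (hz : 2 * r (k - 1) ≤ ‖z‖) (htail : 4 * ‖z‖ ≤ r (k + 1)) :
    ‖z‖ ^ 2 * ‖1 - z / a k‖ / (8 * r 1 * r (k - 1)) ≤ ‖∏' j, (1 - z / a (j + 1))‖ := by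
  have hrk1 := hrpos (k + 1) (by omega)
  have hhead : ∀ i ∈ Ico 1 k, 2 ≤ ‖z / a i‖ := fun i hi => by
    have hri := hrpos i (mem_Ico.1 hi).1
    rw [norm_div, ha i (mem_Ico.1 hi).1, le_div_iff₀ hri]
    linarith [hmono i (mem_Ico.1 hi).2]
  have hT : 2 * ‖z‖ / r (k + 1) ≤ 1 / 2 := by
    rw [div_le_iff₀ hrk1]; linarith
  have hlow := le_norm_tprod (b := fun i => z / a i) hmul (by omega)
    (fun i hi => one_le_two.trans (hhead i hi))
    (sum_Ico_norm_div_le ha hrk1 h2) (hT.trans (by norm_num))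
  -- all head factors are `≥ 1`; those at `i = 1` and `i = k - 1` already give the bound
  have hpair := mul_le_prod_of_one_le (f := fun i => ‖z / a i‖ - 1)
    (fun i hi => by linarith [hhead i hi]) (i := 1) (j := k - 1) (by simp; omega)
    (by simp; omega) (by omega)
  have hhalf : ∀ i ∈ Ico 1 k, ‖z‖ / (2 * r i) ≤ ‖z / a i‖ - 1 := fun i hi => by
    have := hhead i hi
    rw [norm_div, ha i (mem_Ico.1 hi).1] at this ⊢
    rw [mul_comm, ← div_div]
    linarith
  have hr1 := hrpos 1 le_rfl
  have hrk := hrpos (k - 1) (by omega)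
  calc ‖z‖ ^ 2 * ‖1 - z / a k‖ / (8 * r 1 * r (k - 1))
      = ‖z‖ / (2 * r 1) * (‖z‖ / (2 * r (k - 1))) * ‖1 - z / a k‖ * (1 / 2) := by
        field_simp; ring
    _ ≤ (∏ i ∈ Ico 1 k, (‖z / a i‖ - 1)) * ‖1 - z / a k‖ * (1 - 2 * ‖z‖ / r (k + 1)) := by
        have hprod := (mul_le_mul (hhalf 1 (by simp; omega)) (hhalf (k - 1) (by simp; omega))
          (by positivity) (by linarith [hhead 1 (by simp; omega)])).trans hpair
        have hprod0 := (by positivity : 0 ≤ ‖z‖ / (2 * r 1) * (‖z‖ / (2 * r (k - 1))))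
        exact mul_le_mul (mul_le_mul_of_nonneg_right hprod (norm_nonneg _)) (by linarith)
          (by norm_num) (mul_nonneg (hprod0.trans hprod) (norm_nonneg _))
    _ ≤ _ := hlow

end Estimates

section CriticalValues

variable {N : ℕ} {C : ℂ} {r : ℕ → ℝ} {a c : ℕ → ℂ}

theorem exists_tendsto_norm_mul_le {P : ℕ → ℝ} (hP : ∀ k, 1 ≤ k → 0 < P k)
    (hrpos : ∀ k, 1 ≤ k → 0 < r k)
    (hr2 : ∀ᶠ k in atTop, 2 * r k ≤ r (k + 1))
    (hrec : ∀ k, 1 ≤ k → r (k + 1) = P k * r k ^ N * ∏ j ∈ Icc 1 k, (1 + r k / r j))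
    (ha : ∀ k, 1 ≤ k → ‖a k‖ = r k) (hmul : ∀ k, Multipliable fun j => 1 - c k / a (j + 1))
    (hθ : Tendsto (fun k : ℕ => (k : ℝ) ^ 2 * (r (k - 1) / r k)) atTop (𝓝 0))
    (hρ : Tendsto (fun k => r k / r (k + 1)) atTop (𝓝 0))
    (hv : Tendsto (fun k : ℕ => (k : ℝ) * (‖c k‖ / r k - 1)) atTop (𝓝 (-1)))
    (hs : Tendsto (fun k : ℕ => (k : ℝ) * ‖1 - c k / a k‖) atTop (𝓝 1)) :
    ∃ g : ℕ → ℝ, Tendsto g atTop (𝓝 (‖C‖ / (2 * Real.exp 1))) ∧ ∀ᶠ k in atTop,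
      ‖C‖ * ‖c k‖ ^ N * ‖∏' j, (1 - c k / a (j + 1))‖ * (k * P k) ≤ g k * r (k + 1) := by
  set v := fun k => ‖c k‖ / r k
  set E := fun k : ℕ => ((k : ℝ) - 1) * (v k - 1) + |v k - 1| * ((k : ℝ) ^ 2 * (r (k - 1) / r k))
    + 2 * v k * (r k / r (k + 1))
  refine ⟨fun k => ‖C‖ / 2 * v k ^ N * ((k : ℝ) * ‖1 - c k / a k‖) * Real.exp (E k), ?_, ?_⟩
  · have hv1 : Tendsto (fun k => v k - 1) atTop (𝓝 0) :=
      tendsto_zero_of_tendsto_natCast_mul tendsto_id hv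
    have hE : Tendsto E atTop (𝓝 (-1)) := by
      have := ((hv.sub hv1).add (hv1.abs.mul hθ)).add (((hv1.const_add 1).const_mul 2).mul hρ)
      simp only [abs_zero, add_zero, sub_zero, mul_zero] at this
      refine this.congr fun k => ?_
      simp only [E]
      ring
    have := (((hv1.const_add 1).pow N).const_mul (‖C‖ / 2)).mul hs |>.mul
      ((Real.continuous_exp.tendsto _).comp hE)
    simp only [add_zero, one_pow, mul_one, Function.comp_def] at this
    convert this using 2
    · simp
    · rw [Real.exp_neg]; field_simp
  have hpos : ∀ᶠ k in atTop, 0 < r k := eventually_atTop.2 ⟨1, hrpos⟩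
  filter_upwards [eventually_ge_atTop 2, eventually_forall_lt_le_pred hpos hr2,
    eventually_forall_ge_atTop.2 hr2] with k hk hmono h2
  have hrk := hrpos k (by omega)
  have hbound := norm_tprod_le_prod_mul_exp ha hrpos (hmul k) hk hmono fun i hi => h2 i (by omega)
  have hck : ‖c k‖ = v k * r k := by simp [v, div_mul_cancel₀ _ hrk.ne']
  have hE : E k = ((k : ℝ) - 1) * (v k - 1) + |v k - 1| * ((k : ℝ) ^ 2 * (r (k - 1) / r k)) +
      2 * ‖c k‖ / r (k + 1) := by
    simp only [E, hck]; field_simp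
  -- `hrec` has the product of the bound, times the factor `2` at `j = k`
  have hrk1 : r (k + 1) = 2 * (P k * r k ^ N * ∏ i ∈ Ico 1 k, (1 + r k / r i)) := by
    rw [hrec k (by omega), ← Ico_add_one_right_eq_Icc, prod_Ico_succ_top (by omega),
      div_self hrk.ne']
    ring
  have hPk := hP k (by omega)
  calc ‖C‖ * ‖c k‖ ^ N * ‖∏' j, (1 - c k / a (j + 1))‖ * (k * P k)
      ≤ ‖C‖ * ‖c k‖ ^ N * ((∏ i ∈ Ico 1 k, (1 + r k / r i)) * ‖1 - c k / a k‖ * Real.exp (E k)) *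
          (k * P k) := by
        rw [hE]; gcongr
    _ = _ := by rw [hrk1, hck]; ring

theorem eventually_lt_norm_mul (hC : C ≠ 0) (hrpos : ∀ k, 1 ≤ k → 0 < r k)
    (hr2 : ∀ᶠ k in atTop, 2 * r k ≤ r (k + 1))
    (ha : ∀ k, 1 ≤ k → ‖a k‖ = r k) (hmul : ∀ k, Multipliable fun j => 1 - c k / a (j + 1))
    (hθ : Tendsto (fun k : ℕ => (k : ℝ) ^ 2 * (r (k - 1) / r k)) atTop (𝓝 0))
    (hρ : Tendsto (fun k => r k / r (k + 1)) atTop (𝓝 0))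
    (hv : Tendsto (fun k => ‖c k‖ / r k) atTop (𝓝 1))
    (hs : Tendsto (fun k : ℕ => (k : ℝ) * ‖1 - c k / a k‖) atTop (𝓝 1)) :
    ∀ᶠ k : ℕ in atTop, (k : ℝ) * r k < ‖C‖ * ‖c k‖ ^ N * ‖∏' j, (1 - c k / a (j + 1))‖ := by
  have hpos : ∀ᶠ k in atTop, 0 < r k := eventually_atTop.2 ⟨1, hrpos⟩
  have hr1 := hrpos 1 le_rfl
  have hδ : 0 < 9 * ‖C‖ / (256 * r 1) := by have := norm_pos_iff.2 hC; positivity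
  filter_upwards [eventually_ge_atTop 3, eventually_forall_lt_le_pred hpos hr2,
    eventually_forall_ge_atTop.2 hr2,
    hv.eventually (eventually_ge_nhds (by norm_num : (3 / 4 : ℝ) < 1)),
    hv.eventually (eventually_le_nhds (by norm_num : (1 : ℝ) < 2)),
    hθ.eventually (eventually_le_nhds (by norm_num : (0 : ℝ) < 3 / 8)),
    hθ.eventually (eventually_lt_nhds hδ),
    hρ.eventually (eventually_le_nhds (by norm_num : (0 : ℝ) < 1 / 8)),
    (tendsto_atTop_of_two_mul_le hpos hr2).eventually_ge_atTop (4 / 3),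
    hs.eventually (eventually_ge_nhds (by norm_num : (1 / 2 : ℝ) < 1))]
    with k hk hmono h2 hv34 hv2 hθ38 hθδ hρ8 hrk43 hs12
  have hrk := hrpos k (by omega)
  have hrk' := hrpos (k - 1) (by omega)
  have hrk1 := hrpos (k + 1) (by omega)
  have hkpos : (0 : ℝ) < k := by positivity
  have hzge : 3 / 4 * r k ≤ ‖c k‖ := by rwa [le_div_iff₀ hrk] at hv34
  have hzle : ‖c k‖ ≤ 2 * r k := by rwa [div_le_iff₀ hrk] at hv2
  have hpred : r (k - 1) ≤ 3 / 8 * r k := by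
    have : r (k - 1) / r k ≤ 3 / 8 := (le_mul_of_one_le_left (by positivity)
      (one_le_pow₀ (by exact_mod_cast (by omega : 1 ≤ k)))).trans hθ38
    rwa [div_le_iff₀ hrk] at this
  have hlow := le_norm_tprod_of_two_mul_le ha hrpos (hmul k) hk hmono (fun i hi => h2 i (by omega))
    (by linarith) (by rw [div_le_iff₀ hrk1] at hρ8; linarith)
  have hzN : 1 ≤ ‖c k‖ ^ N := one_le_pow₀ (by linarith)
  have hsk : 1 / (2 * k) ≤ ‖1 - c k / a k‖ := by
    rw [div_le_iff₀ (by positivity)]; linarith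
  calc (k : ℝ) * r k = (k : ℝ) ^ 2 * (r (k - 1) / r k) * r k ^ 2 / (k * r (k - 1)) := by
        field_simp
    _ < 9 * ‖C‖ / (256 * r 1) * r k ^ 2 / (k * r (k - 1)) := by gcongr
    _ = ‖C‖ * ((3 / 4 * r k) ^ 2 * (1 / (2 * k)) / (8 * r 1 * r (k - 1))) := by
        field_simp; ring
    _ ≤ ‖C‖ * (‖c k‖ ^ 2 * ‖1 - c k / a k‖ / (8 * r 1 * r (k - 1))) := by gcongr
    _ ≤ ‖C‖ * ‖c k‖ ^ N * ‖∏' j, (1 - c k / a (j + 1))‖ := by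
        rw [mul_assoc ‖C‖]
        exact mul_le_mul_of_nonneg_left (hlow.trans (le_mul_of_one_le_left (norm_nonneg _) hzN))
          (norm_nonneg C)

theorem exists_frequently_lt_one_sub_mul {x y p g : ℕ → ℝ} {L : ℝ} (hL : 0 ≤ L)
    (hg : Tendsto g atTop (𝓝 L)) (hp : (L : EReal) < limsup (fun k => (p k : EReal)) atTop)
    (hxy : ∀ᶠ k in atTop, x k * p k ≤ g k * y k) (hy : ∀ᶠ k in atTop, 0 < y k) :
    ∃ ε : ℝ, 0 < ε ∧ ∃ᶠ k in atTop, x k < (1 - ε) * y k := by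
  obtain ⟨β, hLβ, hβp⟩ := EReal.lt_iff_exists_real_btwn.1 hp
  have hLβ : L < β := EReal.coe_lt_coe_iff.1 hLβ
  have hβ : 0 < β := hL.trans_lt hLβ
  refine ⟨1 - (L + β) / 2 / β, by rw [sub_pos, div_lt_one hβ]; linarith, ?_⟩
  refine ((frequently_lt_of_lt_limsup (by isBoundedDefault) hβp).and_eventually
    ((hg.eventually (gt_mem_nhds (by linarith : L < (L + β) / 2))).and (hxy.and hy))).mono ?_
  rintro k ⟨hpk, hgk, hxyk, hyk⟩
  have hpk : β < p k := EReal.coe_lt_coe_iff.1 hpk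
  rw [sub_sub_cancel, div_mul_eq_mul_div, lt_div_iff₀ hβ]
  rcases lt_or_ge (x k) 0 with hx | hx
  · nlinarith
  · nlinarith [mul_le_mul_of_nonneg_left hpk.le hx]

end CriticalValues

end LacunaryCriticalValues

open LacunaryCriticalValues

theorem stmt_9_general (N : ℕ) (C : ℂ) (hC : C ≠ 0)
    (P r : ℕ → ℝ)
    (hP : ∀ k, 1 ≤ k → 0 < P k)
    (hPlim : Tendsto (fun k : ℕ => (P k) ^ ((1 : ℝ) / k)) atTop (nhds 1))
    (hrpos : ∀ k, 1 ≤ k → 0 < r k)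
    (hr2 : ∀ᶠ k in atTop, 2 * r k ≤ r (k + 1))
    (hrec : ∀ k, 1 ≤ k →
      r (k + 1) = P k * (r k) ^ N * ∏ j ∈ Finset.Icc 1 k, (1 + r k / r j))
    (a : ℕ → ℂ) (ha : ∀ k, 1 ≤ k → ‖a k‖ = r k)
    (f : ℂ → ℂ)
    (hmul : ∀ z : ℂ, Multipliable (fun k : ℕ => 1 - z / a (k + 1)))
    (hf : ∀ z : ℂ, f z = C * z ^ N * ∏' k : ℕ, (1 - z / a (k + 1)))
    (c : ℕ → ℂ)
    (hc1 : Tendsto (fun k : ℕ => ((k : ℂ) + N) * (1 - c k / a k)) atTop (nhds 1))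
    (hsup : ((‖C‖ / (2 * Real.exp 1) : ℝ) : EReal) <
      Filter.limsup (fun k : ℕ => (((k : ℝ) * P k : ℝ) : EReal)) atTop) :
    ∃ ε : ℝ, 0 < ε ∧ ∃ᶠ k : ℕ in atTop,
      (k : ℝ) * r k < ‖f (c k)‖ ∧
        ‖f (c k)‖ < (1 - ε) * r (k + 1) := by
  have hnorm : ∀ z, ‖f z‖ = ‖C‖ * ‖z‖ ^ N * ‖∏' j, (1 - z / a (j + 1))‖ := fun z => by
    simp [hf]
  have hρ2 := tendsto_succ_sq_mul_div_succ hP hPlim hrpos hr2 hrec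
  have hρ := tendsto_div_succ_of_succ_sq_mul hrpos hρ2
  have hθ : Tendsto (fun k : ℕ => (k : ℝ) ^ 2 * (r (k - 1) / r k)) atTop (𝓝 0) :=
    (tendsto_add_atTop_iff_nat 1).1 (by simpa using hρ2)
  have hks := tendsto_natCast_mul_of_tendsto_add_mul N hc1
  have hs : Tendsto (fun k : ℕ => (k : ℝ) * ‖1 - c k / a k‖) atTop (𝓝 1) := by
    simpa using hks.norm
  have hv : Tendsto (fun k : ℕ => (k : ℝ) * (‖c k‖ / r k - 1)) atTop (𝓝 (-1)) := by
    refine (tendsto_natCast_mul_norm_sub_one hks).congr' ?_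
    filter_upwards [eventually_ge_atTop 1] with k hk
    rw [norm_div, ha k hk]
  obtain ⟨g, hg, hupper⟩ := exists_tendsto_norm_mul_le (C := C) hP hrpos hr2 hrec ha
    (fun k => hmul (c k)) hθ hρ hv hs
  obtain ⟨ε, hε, hfreq⟩ := exists_frequently_lt_one_sub_mul (by positivity) hg hsup
    hupper (eventually_atTop.2 ⟨1, fun k hk => hrpos (k + 1) (by omega)⟩)
  have hlower := eventually_lt_norm_mul (N := N) hC hrpos hr2 ha (fun k => hmul (c k)) hθ hρ
    (by simpa using (tendsto_zero_of_tendsto_natCast_mul tendsto_id hv).add_const 1) hs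
  exact ⟨ε, hε, (hfreq.and_eventually hlower).mono fun k hk => by
    rw [hnorm]; exact ⟨hk.2, hk.1⟩⟩

/-- if `limsup k P_k > |C|/(2e)`, then there is `ε > 0` with
`k r_k < |f(c_k)| < (1-ε) r_{k+1}` for infinitely many `k`. -/
theorem stmt_9 (N : ℕ) (C : ℂ) (hC : C ≠ 0)
    (P r : ℕ → ℝ)
    (hP : ∀ k, 1 ≤ k → 0 < P k)
    (hPlim : Tendsto (fun k : ℕ => (P k) ^ ((1 : ℝ) / k)) atTop (nhds 1))
    (hrpos : ∀ k, 1 ≤ k → 0 < r k)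
    (hr2 : ∀ᶠ k in atTop, 2 * r k ≤ r (k + 1))
    (hrec : ∀ k, 1 ≤ k →
      r (k + 1) = P k * (r k) ^ N * ∏ j ∈ Finset.Icc 1 k, (1 + r k / r j))
    (a : ℕ → ℂ) (ha : ∀ k, 1 ≤ k → ‖a k‖ = r k)
    (f : ℂ → ℂ)
    (hmul : ∀ z : ℂ, Multipliable (fun k : ℕ => 1 - z / a (k + 1)))
    (hf : ∀ z : ℂ, f z = C * z ^ N * ∏' k : ℕ, (1 - z / a (k + 1)))
    (c : ℕ → ℂ)
    (hc : ∀ᶠ k in atTop, deriv f (c k) = 0 ∧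
      Real.sqrt (r (k - 1) * r k) ≤ ‖c k‖ ∧
      ‖c k‖ ≤ Real.sqrt (r k * r (k + 1)))
    (hc1 : Tendsto (fun k : ℕ => ((k : ℂ) + N) * (1 - c k / a k)) atTop (nhds 1))
    (hsup : ((‖C‖ / (2 * Real.exp 1) : ℝ) : EReal) <
      Filter.limsup (fun k : ℕ => (((k : ℝ) * P k : ℝ) : EReal)) atTop) :
    ∃ ε : ℝ, 0 < ε ∧ ∃ᶠ k : ℕ in atTop,
      (k : ℝ) * r k < ‖f (c k)‖ ∧
        ‖f (c k)‖ < (1 - ε) * r (k + 1) :=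
  stmt_9_general N C hC P r hP hPlim hrpos hr2 hrec a ha f hmul hf c hc1 hsup
end

section
/- If liminf_{k→∞} k P_k > 0, then there exist δ > 0 and K such that for all k ≥ K, |f(z)| ≤ r_{k+1}/2 whenever |z − a_k| = δ r_k / k. -/
/-!
On the circle `|z - a_k| = ε r_k` with `ε = δ / k`, the factor `1 - z/a_k` has modulus exactly `ε`.
The factors with `j < k` are at most `(1 + ε)(1 + r_k/r_j)`, and since `k ε ≤ 1` their product is
at most `e ∏_{j<k} (1 + r_k/r_j)`; the factors with `j > k` are at most `1 + 2^{k+1-j}` because the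
`r_j` at least double, so they contribute at most `e²`. Together with `|z|^N ≤ (2 r_k)^N` this gives
`|f z| ≤ |C| 2^N e³ (δ/k) r_k^N ∏_{j<k} (1 + r_k/r_j)`, while the recursion says
`r_{k+1}/2 = P_k r_k^N ∏_{j<k} (1 + r_k/r_j)`. So it suffices that `|C| 2^N e³ δ ≤ k P_k`, which the
liminf hypothesis provides for all large `k` once `δ` is small.
-/

open Filter Finset Real

lemma exists_pos_eventually_lt_of_liminf_pos {α : Type*} {l : Filter α} {u : α → ℝ}
    (h : (0 : EReal) < liminf (fun x => (u x : EReal)) l) :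
    ∃ c : ℝ, 0 < c ∧ ∀ᶠ x in l, c < u x := by
  obtain ⟨c, hc0, hc⟩ := EReal.lt_iff_exists_real_btwn.mp h
  exact ⟨c, mod_cast hc0, (eventually_lt_of_lt_liminf hc).mono fun _ hx => mod_cast hx⟩

lemma two_pow_mul_le_of_doubling {r : ℕ → ℝ} {K : ℕ} (h : ∀ n ≥ K, 2 * r n ≤ r (n + 1))
    {n : ℕ} (hn : K ≤ n) (i : ℕ) : 2 ^ i * r n ≤ r (n + i) := by
  induction i with
  | zero => simp
  | succ i ih =>
    have := h (n + i) (by omega)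
    rw [pow_succ, ← add_assoc]
    linarith

lemma one_add_pow_le_exp_mul {ε : ℝ} (hε : 0 ≤ ε) (m : ℕ) : (1 + ε) ^ m ≤ exp (m * ε) := by
  simpa using prod_one_add_le_exp_sum (range m) (fun _ => hε)

lemma prod_one_add_geometric_le_exp_two (t : ℕ) :
    ∏ i ∈ range t, (1 + (1 / 2 : ℝ) ^ i) ≤ exp 2 :=
  (prod_one_add_le_exp_sum _ fun _ => by positivity).trans
    (exp_le_exp.mpr (sum_geometric_two_le t))

section Factors

variable {𝕜 : Type*} [NormedField 𝕜]

lemma norm_le_one_add_mul_of_norm_sub_eq {z a : 𝕜} {ε : ℝ} (hz : ‖z - a‖ = ε * ‖a‖) :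
    ‖z‖ ≤ (1 + ε) * ‖a‖ := by
  linarith [norm_le_norm_add_norm_sub' z a]

lemma norm_one_sub_div_le (z a : 𝕜) : ‖1 - z / a‖ ≤ 1 + ‖z‖ / ‖a‖ := by
  simpa [norm_div] using norm_sub_le (1 : 𝕜) (z / a)

lemma norm_one_sub_div_eq {a : 𝕜} (ha : a ≠ 0) (z : 𝕜) : ‖1 - z / a‖ = ‖z - a‖ / ‖a‖ := by
  rw [one_sub_div ha, norm_div, norm_sub_rev]

lemma norm_one_sub_div_le_mul {z a : 𝕜} {ρ ε : ℝ} (hρ : 0 ≤ ρ) (hε : 0 ≤ ε)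
    (hz : ‖z‖ ≤ (1 + ε) * ρ) : ‖1 - z / a‖ ≤ (1 + ε) * (1 + ρ / ‖a‖) := by
  have : ‖z‖ / ‖a‖ ≤ (1 + ε) * (ρ / ‖a‖) := by
    rw [mul_div_assoc']; gcongr
  have : 0 ≤ ε * (ρ / ‖a‖) := by positivity
  linarith [norm_one_sub_div_le z a]

lemma norm_one_sub_div_le_geometric {z a : 𝕜} {ρ : ℝ} (hρ : 0 < ρ) (hz : ‖z‖ ≤ 2 * ρ)
    {i : ℕ} (ha : 2 ^ (i + 1) * ρ ≤ ‖a‖) : ‖1 - z / a‖ ≤ 1 + (1 / 2) ^ i := by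
  have : ‖z‖ / ‖a‖ ≤ (1 / 2) ^ i := by
    rw [div_le_iff₀ ((by positivity : (0 : ℝ) < 2 ^ (i + 1) * ρ).trans_le ha)]
    calc ‖z‖ ≤ 2 * ρ := hz
      _ = (1 / 2) ^ i * (2 ^ (i + 1) * ρ) := by rw [pow_succ, one_div_pow]; field_simp
      _ ≤ (1 / 2) ^ i * ‖a‖ := by gcongr
  linarith [norm_one_sub_div_le z a]

end Factors

section Sequence

variable {r : ℕ → ℝ} {a : ℕ → ℂ}

lemma prod_Icc_one_add_div_eq {m : ℕ} (hr : r (m + 1) ≠ 0) :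
    ∏ j ∈ Icc 1 (m + 1), (1 + r (m + 1) / r j)
      = 2 * ∏ j ∈ range m, (1 + r (m + 1) / r (j + 1)) := by
  rw [← Ico_add_one_right_eq_Icc, prod_Ico_eq_prod_range, Nat.add_sub_cancel, prod_range_succ,
    add_comm 1 m, div_self hr]
  simp only [add_comm 1]
  ring

lemma prod_one_add_div_pos (hrpos : ∀ k, 1 ≤ k → 0 < r k) (m : ℕ) :
    0 < ∏ j ∈ range m, (1 + r (m + 1) / r (j + 1)) :=
  prod_pos fun j _ => by
    have := hrpos (j + 1) (by omega)
    have := hrpos (m + 1) (by omega)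
    positivity

variable (hrpos : ∀ k, 1 ≤ k → 0 < r k) (ha : ∀ k, 1 ≤ k → ‖a k‖ = r k)
  {K : ℕ} (hdouble : ∀ n ≥ K, 2 * r n ≤ r (n + 1))
  {m : ℕ} (hm : K ≤ m + 1) {z : ℂ} {ε : ℝ} (hε0 : 0 ≤ ε) (hε1 : ε ≤ 1)
  (hz : ‖z - a (m + 1)‖ = ε * r (m + 1))
include hrpos ha hdouble hm hε0 hε1 hz

lemma norm_prod_range_le (t : ℕ) :
    ‖∏ j ∈ range (m + 1 + t), (1 - z / a (j + 1))‖
      ≤ (1 + ε) ^ m * (∏ j ∈ range m, (1 + r (m + 1) / r (j + 1))) * ε * exp 2 := by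
  have hr : 0 < r (m + 1) := hrpos _ (by omega)
  have hz' : ‖z‖ ≤ (1 + ε) * r (m + 1) := by
    rw [← ha _ (by omega)] at hz ⊢
    exact norm_le_one_add_mul_of_norm_sub_eq hz
  rw [prod_range_add, prod_range_succ, norm_mul, norm_mul, norm_prod, norm_prod]
  have hinit : ∏ j ∈ range m, ‖1 - z / a (j + 1)‖
      ≤ (1 + ε) ^ m * ∏ j ∈ range m, (1 + r (m + 1) / r (j + 1)) := by
    rw [← card_range m, ← prod_const, card_range, ← prod_mul_distrib]
    refine prod_le_prod (fun _ _ => norm_nonneg _) fun j _ => ?_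
    rw [← ha (j + 1) (by omega)]
    exact norm_one_sub_div_le_mul hr.le hε0 hz'
  have hcentre : ‖1 - z / a (m + 1)‖ = ε := by
    have ha₀ : a (m + 1) ≠ 0 := by rw [← norm_ne_zero_iff, ha _ (by omega)]; exact hr.ne'
    rw [norm_one_sub_div_eq ha₀, hz, ha _ (by omega), mul_div_cancel_right₀ _ hr.ne']
  have htail : ∏ i ∈ range t, ‖1 - z / a (m + 1 + i + 1)‖ ≤ exp 2 := by
    refine (prod_le_prod (fun _ _ => norm_nonneg _) fun i _ => ?_).trans
      (prod_one_add_geometric_le_exp_two t)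
    refine norm_one_sub_div_le_geometric hr (by nlinarith) ?_
    rw [ha _ (by omega), add_assoc]
    exact two_pow_mul_le_of_doubling hdouble hm (i + 1)
  rw [hcentre]
  have hR := prod_one_add_div_pos hrpos m
  exact mul_le_mul (mul_le_mul_of_nonneg_right hinit hε0) htail
    (prod_nonneg fun _ _ => norm_nonneg _) (by positivity)

lemma norm_tprod_le (hmul : Multipliable fun j => 1 - z / a (j + 1)) (hmε : m * ε ≤ 1) :
    ‖∏' j, (1 - z / a (j + 1))‖ ≤ ε * exp 3 * ∏ j ∈ range m, (1 + r (m + 1) / r (j + 1)) := by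
  have hR := prod_one_add_div_pos hrpos m
  have hpow : (1 + ε) ^ m ≤ exp 1 := (one_add_pow_le_exp_mul hε0 m).trans (exp_le_exp.mpr hmε)
  refine le_of_tendsto hmul.hasProd.tendsto_prod_nat.norm
    (eventually_atTop.mpr ⟨m + 1, fun n hn => ?_⟩)
  obtain ⟨t, rfl⟩ := Nat.exists_eq_add_of_le hn
  calc _ ≤ (1 + ε) ^ m * (∏ j ∈ range m, (1 + r (m + 1) / r (j + 1))) * ε * exp 2 :=
        norm_prod_range_le hrpos ha hdouble hm hε0 hε1 hz t
    _ ≤ exp 1 * (∏ j ∈ range m, (1 + r (m + 1) / r (j + 1))) * ε * exp 2 := by gcongr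
    _ = ε * exp 3 * ∏ j ∈ range m, (1 + r (m + 1) / r (j + 1)) := by
        rw [show (3 : ℝ) = 1 + 2 by norm_num, exp_add]; ring

lemma norm_mul_pow_mul_tprod_le (C : ℂ) (N : ℕ) (hmul : Multipliable fun j => 1 - z / a (j + 1))
    (hmε : m * ε ≤ 1) :
    ‖C * z ^ N * ∏' j, (1 - z / a (j + 1))‖
      ≤ ‖C‖ * 2 ^ N * exp 3 * ε * (r (m + 1) ^ N * ∏ j ∈ range m, (1 + r (m + 1) / r (j + 1))) := by
  have hz' : ‖z‖ ≤ 2 * r (m + 1) := by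
    rw [← ha _ (by omega)] at hz ⊢
    nlinarith [norm_le_one_add_mul_of_norm_sub_eq hz, norm_nonneg (a (m + 1))]
  rw [norm_mul, norm_mul, norm_pow]
  have hr := hrpos (m + 1) (by omega)
  calc _ ≤ ‖C‖ * (2 * r (m + 1)) ^ N
          * (ε * exp 3 * ∏ j ∈ range m, (1 + r (m + 1) / r (j + 1))) :=
        mul_le_mul (by gcongr) (norm_tprod_le hrpos ha hdouble hm hε0 hε1 hz hmul hmε)
          (norm_nonneg _) (by positivity)
    _ = _ := by ring

end Sequence

theorem stmt_12_general (N : ℕ) (C : ℂ)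
    (P r : ℕ → ℝ)
    (hrpos : ∀ k, 1 ≤ k → 0 < r k)
    (hr2 : ∀ᶠ k in atTop, 2 * r k ≤ r (k + 1))
    (hrec : ∀ k, 1 ≤ k →
      r (k + 1) = P k * (r k) ^ N * ∏ j ∈ Finset.Icc 1 k, (1 + r k / r j))
    (a : ℕ → ℂ) (ha : ∀ k, 1 ≤ k → ‖a k‖ = r k)
    (f : ℂ → ℂ)
    (hmul : ∀ z : ℂ, Multipliable (fun k : ℕ => 1 - z / a (k + 1)))
    (hf : ∀ z : ℂ, f z = C * z ^ N * ∏' k : ℕ, (1 - z / a (k + 1)))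
    (hinf : (0 : EReal) <
      Filter.liminf (fun k : ℕ => (((k : ℝ) * P k : ℝ) : EReal)) atTop) :
    ∃ δ : ℝ, 0 < δ ∧ ∃ K : ℕ, ∀ k, K ≤ k →
      ∀ z : ℂ, ‖z - a k‖ = δ * r k / (k : ℝ) →
        ‖f z‖ ≤ r (k + 1) / 2 := by
  obtain ⟨c, hc0, hc⟩ := exists_pos_eventually_lt_of_liminf_pos hinf
  obtain ⟨K₁, hK₁⟩ := eventually_atTop.mp hr2
  obtain ⟨K₂, hK₂⟩ := eventually_atTop.mp hc
  set A := ‖C‖ * 2 ^ N * exp 3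
  have hA : 0 ≤ A := by positivity
  set δ := c / (A + c)
  have hδ1 : δ ≤ 1 := div_le_one_of_le₀ (by linarith) (by positivity)
  have hAδ : A * δ ≤ c := by
    rw [mul_div_assoc', div_le_iff₀ (by positivity)]; nlinarith
  refine ⟨δ, by positivity, max (max K₁ K₂) 1, fun k hkK z hz => ?_⟩
  obtain ⟨m, rfl⟩ : ∃ m, k = m + 1 := ⟨k - 1, by omega⟩
  have hk : (0 : ℝ) < m + 1 := by positivity
  have hAε : A * (δ / (m + 1)) ≤ P (m + 1) := by
    have := hK₂ (m + 1) (by omega)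
    push_cast at this
    rw [mul_div_assoc', div_le_iff₀ hk]; nlinarith
  have hr : 0 < r (m + 1) := hrpos _ (by omega)
  calc ‖f z‖ ≤ A * (δ / (m + 1))
        * (r (m + 1) ^ N * ∏ j ∈ range m, (1 + r (m + 1) / r (j + 1))) := by
        rw [hf]
        refine norm_mul_pow_mul_tprod_le hrpos ha hK₁ (by omega) (by positivity)
          ((div_le_one hk).mpr (by linarith)) (by rw [hz]; push_cast; ring) C N (hmul z) ?_
        rw [mul_div_assoc', div_le_one hk]; nlinarith
    _ ≤ P (m + 1) * (r (m + 1) ^ N * ∏ j ∈ range m, (1 + r (m + 1) / r (j + 1))) := by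
        have := prod_one_add_div_pos hrpos m
        gcongr
    _ = r (m + 1 + 1) / 2 := by
        rw [hrec (m + 1) (by omega), prod_Icc_one_add_div_eq hr.ne']; ring

/-- if `liminf k P_k > 0`, then there are `δ > 0` and `K` such that
for `k ≥ K`, `|f(z)| ≤ r_{k+1}/2` on the circle `|z - a_k| = δ r_k / k`. -/
theorem stmt_12 (N : ℕ) (C : ℂ) (hC : C ≠ 0)
    (P r : ℕ → ℝ)
    (hP : ∀ k, 1 ≤ k → 0 < P k)
    (hPlim : Tendsto (fun k : ℕ => (P k) ^ ((1 : ℝ) / k)) atTop (nhds 1))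
    (hrpos : ∀ k, 1 ≤ k → 0 < r k)
    (hr2 : ∀ᶠ k in atTop, 2 * r k ≤ r (k + 1))
    (hrec : ∀ k, 1 ≤ k →
      r (k + 1) = P k * (r k) ^ N * ∏ j ∈ Finset.Icc 1 k, (1 + r k / r j))
    (a : ℕ → ℂ) (ha : ∀ k, 1 ≤ k → ‖a k‖ = r k)
    (f : ℂ → ℂ)
    (hmul : ∀ z : ℂ, Multipliable (fun k : ℕ => 1 - z / a (k + 1)))
    (hf : ∀ z : ℂ, f z = C * z ^ N * ∏' k : ℕ, (1 - z / a (k + 1)))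
    (hinf : (0 : EReal) <
      Filter.liminf (fun k : ℕ => (((k : ℝ) * P k : ℝ) : EReal)) atTop) :
    ∃ δ : ℝ, 0 < δ ∧ ∃ K : ℕ, ∀ k, K ≤ k →
      ∀ z : ℂ, ‖z - a k‖ = δ * r k / (k : ℝ) →
        ‖f z‖ ≤ r (k + 1) / 2 :=
  stmt_12_general N C P r hrpos hr2 hrec a ha f hmul hf hinf
end
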